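/- arXiv:2208.10220 — 8 statements merged into one kernel-verified Lean document; each statement's English description precedes it below -/
import Mathlib

section
/- Let F̃(x,z|y) denote the generating function of the first hitting time probability of site x starting from y for a discrete-time process, and suppose 0 < F̃(x, 1-r | x₀) ≤ 1 and 0 < F̃(x, 1-r | x_r) ≤ 1 for a resetting probability 0 < r < 1. Then the generating function of the first hitting time under geometric resetting to x_r, defined by F̃_r(x,z|x₀,x_r) = [(1-z)F̃(x,ζ|x₀) + r z F̃(x,ζ|x_r)] / [1 - z + r z F̃(x,ζ|x_r)] with ζ = (1-r)z, satisfies lim_{z→1⁻} F̃_r(x,z|x₀,x_r) = 1. -/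
open Filter

/-- under geometric resetting with probability `r ∈ (0,1)` to `x_r`,
the first hitting time generating function
`F̃_r(z) = [(1-z)F̃₀(ζ) + rzF̃ᵣ(ζ)]/[1-z+rzF̃ᵣ(ζ)]`, `ζ = (1-r)z`, tends to `1`
as `z → 1⁻`; i.e. the target is hit with probability one.
Here `F0 z = F̃(x,z|x₀)` and `Fr z = F̃(x,z|x_r)` are the reset-free generating
functions (power series, hence continuous at `1-r < 1`). -/
theorem stmt_2 (F0 Fr : ℝ → ℝ) (r : ℝ) (hr0 : 0 < r) (hr1 : r < 1)
    (hF0pos : 0 < F0 (1 - r)) (hF0le : F0 (1 - r) ≤ 1)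
    (hFrpos : 0 < Fr (1 - r)) (hFrle : Fr (1 - r) ≤ 1)
    (hF0cont : ContinuousAt F0 (1 - r)) (hFrcont : ContinuousAt Fr (1 - r)) :
    Tendsto (fun z : ℝ =>
        ((1 - z) * F0 ((1 - r) * z) + r * z * Fr ((1 - r) * z)) /
          (1 - z + r * z * Fr ((1 - r) * z)))
      (nhdsWithin 1 (Set.Iio 1)) (nhds 1) := by
  have hmul : ContinuousAt (fun z : ℝ => (1 - r) * z) 1 := by fun_prop
  have h1 : ((1:ℝ) - r) * 1 = 1 - r := by ring
  have hFr' : ContinuousAt (fun z : ℝ => Fr ((1 - r) * z)) 1 := by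
    have := ContinuousAt.comp (x := (1:ℝ)) (h1 ▸ hFrcont) hmul
    simpa [Function.comp_def] using this
  have hF0' : ContinuousAt (fun z : ℝ => F0 ((1 - r) * z)) 1 := by
    have := ContinuousAt.comp (x := (1:ℝ)) (h1 ▸ hF0cont) hmul
    simpa [Function.comp_def] using this
  have hnum : ContinuousAt (fun z : ℝ =>
      (1 - z) * F0 ((1 - r) * z) + r * z * Fr ((1 - r) * z)) 1 :=
    (((continuousAt_const.sub continuousAt_id).mul hF0').add
      ((continuousAt_const.mul continuousAt_id).mul hFr'))
  have hden : ContinuousAt (fun z : ℝ =>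
      1 - z + r * z * Fr ((1 - r) * z)) 1 :=
    ((continuousAt_const.sub continuousAt_id).add
      ((continuousAt_const.mul continuousAt_id).mul hFr'))
  have hne : (1 : ℝ) - 1 + r * 1 * Fr ((1 - r) * 1) ≠ 0 := by
    rw [h1]; positivity
  have hq : ContinuousAt (fun z : ℝ =>
      ((1 - z) * F0 ((1 - r) * z) + r * z * Fr ((1 - r) * z)) /
        (1 - z + r * z * Fr ((1 - r) * z))) 1 := hnum.div hden hne
  have := hq.continuousWithinAt (s := Set.Iio 1)
  have hne' : r * Fr (1 - r) ≠ 0 := by positivity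
  simpa [ContinuousWithinAt, div_self hne'] using this
end

section
/- With F̃_r(x,z|x₀,x_r) = [(1-z)F̃(x,ζ|x₀) + r z F̃(x,ζ|x_r)] / [1 - z + r z F̃(x,ζ|x_r)], ζ = (1-r)z, and assuming F̃(x,·|x₀), F̃(x,·|x_r) are differentiable at 1-r with F̃(x,1-r|x_r) > 0, the derivative of F̃_r with respect to z evaluated at z = 1 equals [1 - F̃(x,1-r|x₀)] / [r F̃(x,1-r|x_r)]. In particular the mean first hitting time under resetting is ⟨τ_r⟩ = (1 - F̃(x,1-r|x₀)) / (r F̃(x,1-r|x_r)). -/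
/-- the derivative at `z = 1` of the resetting generating function
`F̃_r(z) = [(1-z)F̃₀((1-r)z) + rzF̃ᵣ((1-r)z)]/[1-z+rzF̃ᵣ((1-r)z)]` equals
`(1 - F̃₀(1-r))/(r F̃ᵣ(1-r))`, i.e. the mean first hitting time under resetting. -/
theorem stmt_3 (F0 Fr : ℝ → ℝ) (r d0 dr : ℝ) (hr0 : 0 < r) (hr1 : r < 1)
    (hF0 : HasDerivAt F0 d0 (1 - r)) (hFr : HasDerivAt Fr dr (1 - r))
    (hFrpos : 0 < Fr (1 - r)) :
    HasDerivAt (fun z : ℝ =>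
        ((1 - z) * F0 ((1 - r) * z) + r * z * Fr ((1 - r) * z)) /
          (1 - z + r * z * Fr ((1 - r) * z)))
      ((1 - F0 (1 - r)) / (r * Fr (1 - r))) 1 := by
  have hg : HasDerivAt (fun z : ℝ => (1 - r) * z) (1 - r) 1 := by
    simpa using (hasDerivAt_id (1:ℝ)).const_mul (1 - r)
  have hF0a : HasDerivAt F0 d0 ((fun z : ℝ => (1 - r) * z) 1) := by
    simpa using hF0
  have hFra : HasDerivAt Fr dr ((fun z : ℝ => (1 - r) * z) 1) := by
    simpa using hFr
  have hF0' : HasDerivAt (fun z : ℝ => F0 ((1 - r) * z)) (d0 * (1 - r)) 1 :=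
    hF0a.comp 1 hg
  have hFr' : HasDerivAt (fun z : ℝ => Fr ((1 - r) * z)) (dr * (1 - r)) 1 :=
    hFra.comp 1 hg
  have h1 : HasDerivAt (fun z : ℝ => (1 - z)) (-1 : ℝ) 1 := by
    simpa using (hasDerivAt_id (1:ℝ)).const_sub 1
  have h2 : HasDerivAt (fun z : ℝ => r * z) r 1 := by
    simpa using (hasDerivAt_id (1:ℝ)).const_mul r
  have hN : HasDerivAt (fun z : ℝ => (1 - z) * F0 ((1 - r) * z) + r * z * Fr ((1 - r) * z))
      ((-1) * F0 ((1 - r) * 1) + (1 - 1) * (d0 * (1 - r)) +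
        (r * Fr ((1 - r) * 1) + (r * 1) * (dr * (1 - r)))) 1 :=
    (h1.mul hF0').add (h2.mul hFr')
  have hD : HasDerivAt (fun z : ℝ => 1 - z + r * z * Fr ((1 - r) * z))
      ((-1) + (r * Fr ((1 - r) * 1) + (r * 1) * (dr * (1 - r)))) 1 :=
    h1.add (h2.mul hFr')
  have hDne : (1 - 1 + r * 1 * Fr ((1 - r) * 1)) ≠ 0 := by
    have : (0:ℝ) < r * Fr (1 - r) := mul_pos hr0 hFrpos
    simp only [mul_one, sub_self, zero_add]
    linarith
  have h := hN.div hD hDne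
  convert h using 1
  · rfl
  · rfl
  · rfl
  have hne : r * Fr (1 - r) ≠ 0 := ne_of_gt (mul_pos hr0 hFrpos)
  field_simp
  ring
end

section
/- Let F(x,n|y) be the first hitting probabilities of a nearest-neighbour random walk on ℤ (so F(x,n|y) = 0 for n < |x-y|) with F(x,|x-x_r| | x_r) > 0. Then as r → 1⁻, the mean first hitting time under resetting to x_r satisfies ⟨τ_r⟩ · (1-r)^{|x-x_r|} → 1 / F(x, |x-x_r| | x_r). -/
/-! With `s = 1 - r` the two series are the generating functions `g(s) = ∑ G n sⁿ` and
`f(s) = ∑ F n sⁿ`. A real summable sequence is absolutely summable, so both are continuous on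
`[-1, 1]` (Weierstrass M-test), whence `g(s) → G 0 = 0` as `s → 0`. Since `F` vanishes below `d`,
`f(s) = s ^ d · ∑ F (n + d) sⁿ`, the last series tends to `F d`, and the factor `s ^ d` cancels
against `(1 - r) ^ d`. -/

open Filter Metric Topology

section GeneratingFunction

variable {𝕜 : Type*} [NormedField 𝕜] {c : ℕ → 𝕜}

theorem norm_mul_pow_le_of_norm_le_one {s : 𝕜} (hs : ‖s‖ ≤ 1) (n : ℕ) :
    ‖c n * s ^ n‖ ≤ ‖c n‖ := by
  rw [norm_mul, norm_pow]
  exact mul_le_of_le_one_right (norm_nonneg _) (pow_le_one₀ (norm_nonneg _) hs)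

theorem summable_mul_pow_of_norm_le_one [CompleteSpace 𝕜] (hc : Summable (‖c ·‖)) {s : 𝕜}
    (hs : ‖s‖ ≤ 1) :
    Summable fun n => c n * s ^ n :=
  .of_norm_bounded hc (norm_mul_pow_le_of_norm_le_one hs)

theorem continuousOn_tsum_mul_pow [CompleteSpace 𝕜] (hc : Summable (‖c ·‖)) :
    ContinuousOn (fun s : 𝕜 => ∑' n, c n * s ^ n) (closedBall 0 1) :=
  continuousOn_tsum (fun n => (continuous_const.mul (continuous_pow n)).continuousOn) hc
    fun n s hs => norm_mul_pow_le_of_norm_le_one (by simpa using hs) n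

theorem tendsto_tsum_mul_pow_nhds_zero [CompleteSpace 𝕜] (hc : Summable (‖c ·‖)) :
    Tendsto (fun s : 𝕜 => ∑' n, c n * s ^ n) (𝓝 0) (𝓝 (c 0)) := by
  have h := ((continuousOn_tsum_mul_pow hc).continuousAt
    (closedBall_mem_nhds 0 one_pos)).tendsto
  rwa [tsum_eq_single 0 fun n hn => by simp [zero_pow hn], pow_zero, mul_one] at h

theorem tsum_mul_pow_eq_pow_mul_tsum_nat_add {d : ℕ} (hc : ∀ n < d, c n = 0) {s : 𝕜}
    (hs : Summable fun n => c n * s ^ n) :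
    ∑' n, c n * s ^ n = s ^ d * ∑' n, c (n + d) * s ^ n := by
  rw [← hs.sum_add_tsum_nat_add d, Finset.sum_eq_zero fun n hn => by
    rw [hc n (Finset.mem_range.mp hn), zero_mul], zero_add, ← tsum_mul_left]
  congr 1 with n
  ring

end GeneratingFunction

theorem stmt_6_general (F G : ℕ → ℝ)
    (d : ℕ)
    (hFzero : ∀ n, n < d → F n = 0) (hFd : 0 < F d)
    (hFsummable : Summable F)
    (hG0 : G 0 = 0) (hGsummable : Summable G) :
    Tendsto (fun r : ℝ =>
        ((1 - ∑' n, G n * (1 - r) ^ n) / (r * ∑' n, F n * (1 - r) ^ n))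
          * (1 - r) ^ d)
      (nhdsWithin 1 (Set.Iio 1)) (nhds (1 / F d)) := by
  have hF : Summable (‖F ·‖) := hFsummable.abs
  have hs : Tendsto (fun r : ℝ => 1 - r) (𝓝[<] 1) (𝓝 0) := by
    have h : Tendsto (fun r : ℝ => 1 - r) (𝓝 1) (𝓝 (1 - 1)) := tendsto_const_nhds.sub tendsto_id
    exact tendsto_nhdsWithin_of_tendsto_nhds (by simpa using h)
  have hGlim : Tendsto (fun r : ℝ => ∑' n, G n * (1 - r) ^ n) (𝓝[<] 1) (𝓝 0) := by
    rw [← hG0]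
    exact (tendsto_tsum_mul_pow_nhds_zero (c := G) hGsummable.abs).comp hs
  have hFlim : Tendsto (fun r : ℝ => ∑' n, F (n + d) * (1 - r) ^ n) (𝓝[<] 1) (𝓝 (F d)) := by
    have hFshift : Summable fun n => ‖F (n + d)‖ := (summable_nat_add_iff d).2 hF
    have h := (tendsto_tsum_mul_pow_nhds_zero hFshift).comp hs
    rwa [zero_add] at h
  have hr : Tendsto (fun r : ℝ => r) (𝓝[<] 1) (𝓝 1) :=
    tendsto_nhdsWithin_of_tendsto_nhds tendsto_id
  have hlim := (tendsto_const_nhds (x := (1 : ℝ)).sub hGlim).div (hr.mul hFlim)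
    (by simpa using hFd.ne')
  rw [sub_zero, one_mul] at hlim
  refine hlim.congr' ?_
  filter_upwards [Ioo_mem_nhdsLT (zero_lt_one' ℝ)] with r ⟨hr0, hr1⟩
  have hs1 : ‖1 - r‖ ≤ 1 := by rw [Real.norm_eq_abs, abs_le]; constructor <;> linarith
  have hne : (1 - r) ^ d ≠ 0 := pow_ne_zero d (sub_pos.2 hr1).ne'
  rw [Pi.div_apply, tsum_mul_pow_eq_pow_mul_tsum_nat_add hFzero
    (summable_mul_pow_of_norm_le_one hF hs1), mul_left_comm, div_mul_eq_mul_div,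
    mul_comm ((1 - r) ^ d) (r * _), mul_div_mul_right _ _ hne]

/-- for a nearest-neighbour walk on ℤ, the first hitting probabilities
`F n` from `x_r` to `x` vanish for `n < d := |x - x_r|`; if `F d > 0`, then as
`r → 1⁻` the mean first hitting time under resetting to `x_r`,
`⟨τ_r⟩ = (1 - G̃(1-r))/(r F̃(1-r))` (with `G` the hitting probabilities from `x₀`),
satisfies `⟨τ_r⟩ (1-r)^d → 1 / F d`. -/
theorem stmt_6 (x x₀ xr : ℤ) (F G : ℕ → ℝ)
    (d : ℕ) (hd : d = (x - xr).natAbs)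
    (hFzero : ∀ n, n < d → F n = 0) (hFd : 0 < F d)
    (hFnonneg : ∀ n, 0 ≤ F n) (hFsummable : Summable F) (hFsum : ∑' n, F n ≤ 1)
    (hG0 : G 0 = 0) (hGnonneg : ∀ n, 0 ≤ G n) (hGsummable : Summable G)
    (hGsum : ∑' n, G n ≤ 1) :
    Tendsto (fun r : ℝ =>
        ((1 - ∑' n, G n * (1 - r) ^ n) / (r * ∑' n, F n * (1 - r) ^ n))
          * (1 - r) ^ d)
      (nhdsWithin 1 (Set.Iio 1)) (nhds (1 / F d)) :=
  stmt_6_general F G d hFzero hFd hFsummable hG0 hGsummable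
end

section
/- For the simple symmetric random walk on ℤ, the probability of first hitting site x from site x_r ≠ x in exactly |x - x_r| steps equals 2^{-|x-x_r|}, and consequently the mean first hitting time under resetting satisfies ⟨τ_r⟩ ~ (2/(1-r))^{|x-x_r|} as r → 1⁻. -/
open Filter
open scoped Classical

/-- Position after `m` steps of a ±1 path encoded by `f`, started at `y`. -/
def walkPos (y : ℤ) {n : ℕ} (f : Fin n → Bool) (m : ℕ) : ℤ :=
  y + ∑ i ∈ Finset.univ.filter (fun i : Fin n => (i : ℕ) < m),
    (if f i then (1 : ℤ) else -1)

lemma card_filter_lt (n m : ℕ) (h : m ≤ n) :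
    (Finset.univ.filter (fun i : Fin n => (i : ℕ) < m)).card = m := by
  rw [Finset.card_filter]
  rw [Fin.sum_univ_eq_sum_range (fun i => if i < m then 1 else 0)]
  rw [← Finset.card_filter]
  have : Finset.filter (fun i => i < m) (Finset.range n) = Finset.range m := by
    ext a; simp only [Finset.mem_filter, Finset.mem_range]; omega
  rw [this, Finset.card_range]

lemma walkPos_dist (y : ℤ) {n : ℕ} (f : Fin n → Bool) (m : ℕ) (h : m ≤ n) :
    |walkPos y f m - y| ≤ (m : ℤ) := by
  have h1 : walkPos y f m - y = ∑ i ∈ Finset.univ.filter (fun i : Fin n => (i : ℕ) < m),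
      (if f i then (1 : ℤ) else -1) := by simp [walkPos]
  rw [h1]
  calc |∑ i ∈ Finset.univ.filter (fun i : Fin n => (i : ℕ) < m),
      (if f i then (1 : ℤ) else -1)|
      ≤ ∑ i ∈ Finset.univ.filter (fun i : Fin n => (i : ℕ) < m),
        |if f i then (1 : ℤ) else -1| := Finset.abs_sum_le_sum_abs _ _
    _ ≤ ∑ _i ∈ Finset.univ.filter (fun i : Fin n => (i : ℕ) < m), 1 := by
        apply Finset.sum_le_sum; intro i _; split <;> simp
    _ = (m : ℤ) := by rw [Finset.sum_const, card_filter_lt n m h]; simp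

lemma walkPos_const (y : ℤ) {n : ℕ} (b : Bool) (m : ℕ) (h : m ≤ n) :
    walkPos y (fun _ : Fin n => b) m = y + m * (if b then (1:ℤ) else -1) := by
  simp [walkPos, Finset.sum_const, card_filter_lt n m h, mul_comm]

/-- Probability that the simple symmetric random walk started at `y` first hits
`x` at step `n`. -/
noncomputable def hitProb (y x : ℤ) (n : ℕ) : ℝ :=
  (Finset.univ.filter (fun f : Fin n → Bool =>
      walkPos y f n = x ∧ ∀ m, m < n → 0 < m → walkPos y f m ≠ x)).card / 2 ^ n

lemma hitProb_nonneg (y x : ℤ) (n : ℕ) : 0 ≤ hitProb y x n := by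
  unfold hitProb; positivity

lemma hitProb_le_one (y x : ℤ) (n : ℕ) : hitProb y x n ≤ 1 := by
  unfold hitProb
  rw [div_le_one (by positivity)]
  calc ((Finset.univ.filter (fun f : Fin n → Bool =>
      walkPos y f n = x ∧ ∀ m, m < n → 0 < m → walkPos y f m ≠ x)).card : ℝ)
      ≤ (Finset.univ : Finset (Fin n → Bool)).card := by
        exact_mod_cast Finset.card_le_card (Finset.filter_subset _ _)
    _ = 2 ^ n := by simp [Finset.card_univ]

lemma hitProb_eq_zero (y x : ℤ) (n : ℕ) (h : n < (x - y).natAbs) :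
    hitProb y x n = 0 := by
  unfold hitProb
  have : (Finset.univ.filter (fun f : Fin n → Bool =>
      walkPos y f n = x ∧ ∀ m, m < n → 0 < m → walkPos y f m ≠ x)) = ∅ := by
    rw [Finset.filter_eq_empty_iff]
    rintro f - ⟨h1, -⟩
    have hd := walkPos_dist y f n le_rfl
    rw [h1, Int.abs_eq_natAbs] at hd
    omega
  rw [this]; simp

lemma hitProb_min (y x : ℤ) (hyx : y ≠ x) :
    hitProb y x (x - y).natAbs = 2 ^ (-((x - y).natAbs : ℤ)) := by
  set N := (x - y).natAbs with hN
  have hN0 : 0 < N := by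
    have : x - y ≠ 0 := by omega
    simpa [hN] using Int.natAbs_pos.mpr this
  obtain ⟨b, hxy⟩ : ∃ b : Bool, x - y = (if b then (1:ℤ) else -1) * N := by
    rcases Int.natAbs_eq (x - y) with h | h
    · refine ⟨true, ?_⟩; rw [if_pos rfl, one_mul]; omega
    · refine ⟨false, ?_⟩; rw [if_neg (by simp)]; omega
  have hfilter : Finset.univ.filter (fun i : Fin N => (i : ℕ) < N) = Finset.univ := by
    apply Finset.filter_true_of_mem; intro i _; exact i.isLt
  have hset : (Finset.univ.filter (fun f : Fin N → Bool =>
      walkPos y f N = x ∧ ∀ m, m < N → 0 < m → walkPos y f m ≠ x))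
      = {fun _ => b} := by
    ext g
    simp only [Finset.mem_filter, Finset.mem_univ, true_and, Finset.mem_singleton]
    constructor
    · rintro ⟨h1, -⟩
      have hsum : ∑ i : Fin N, (if g i then (1:ℤ) else -1)
          = (if b then (1:ℤ) else -1) * N := by
        have h2 : walkPos y g N - y = x - y := by rw [h1]
        rw [walkPos, hfilter] at h2
        omega
      have hzero : ∑ i : Fin N,
          (1 - (if b then (1:ℤ) else -1) * (if g i then (1:ℤ) else -1)) = 0 := by
        rw [Finset.sum_sub_distrib, ← Finset.mul_sum, hsum, ← mul_assoc]
        rcases b with _|_ <;> simp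
      have hall : ∀ i : Fin N,
          (1 - (if b then (1:ℤ) else -1) * (if g i then (1:ℤ) else -1)) = 0 := by
        intro i
        refine (Finset.sum_eq_zero_iff_of_nonneg ?_).mp hzero i (Finset.mem_univ i)
        intro j _
        rcases b with _|_ <;> rcases hgj : g j with _|_ <;> simp
      funext i
      have h3 := hall i
      rcases b with _|_ <;> rcases hgi : g i with _|_ <;> simp [hgi] at h3 ⊢ <;> omega
    · rintro rfl
      constructor
      · rw [walkPos_const y b N le_rfl]
        rcases b with _|_ <;> simp at hxy ⊢ <;> omega
      · intro m hm hm0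
        rw [walkPos_const y b m hm.le]
        intro hcon
        rcases b with _|_ <;> simp at hxy hcon <;> omega
  rw [hitProb, hset, Finset.card_singleton, zpow_neg, zpow_natCast]
  simp

/-- Generating function of the first hitting time probabilities,
`F̃(x,z|y) = ∑_{n≥1} F(x,n|y) zⁿ`. -/
noncomputable def hitGF (y x : ℤ) (z : ℝ) : ℝ :=
  ∑' n : ℕ, hitProb y x (n + 1) * z ^ (n + 1)

lemma summable_aux (y x : ℤ) {z : ℝ} (hz0 : 0 ≤ z) (hz : z ≤ 1/2) :
    Summable (fun n : ℕ => hitProb y x (n+1) * z^(n+1)) := by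
  refine Summable.of_nonneg_of_le
    (fun n => mul_nonneg (hitProb_nonneg y x (n+1)) (pow_nonneg hz0 _))
    (fun n => ?_) summable_geometric_two
  calc hitProb y x (n+1) * z^(n+1) ≤ 1 * z^(n+1) := by
          apply mul_le_mul_of_nonneg_right (hitProb_le_one y x (n+1)) (pow_nonneg hz0 _)
      _ = z^(n+1) := one_mul _
      _ ≤ (1/2)^(n+1) := pow_le_pow_left₀ hz0 hz _
      _ ≤ (1/2)^n := by
          apply pow_le_pow_of_le_one (by norm_num) (by norm_num); omega

lemma hitGF_nonneg (y x : ℤ) {z : ℝ} (hz0 : 0 ≤ z) : 0 ≤ hitGF y x z :=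
  tsum_nonneg (fun n => mul_nonneg (hitProb_nonneg y x (n+1)) (pow_nonneg hz0 _))

lemma hitGF_le (y x : ℤ) {z : ℝ} (hz0 : 0 ≤ z) (hz : z ≤ 1/2) :
    hitGF y x z ≤ 2 * z := by
  have h1 : hitGF y x z ≤ ∑' n : ℕ, z * (1/2 : ℝ)^n := by
    refine Summable.tsum_le_tsum (fun n => ?_) (summable_aux y x hz0 hz)
      (summable_geometric_two.mul_left z)
    calc hitProb y x (n+1) * z^(n+1) ≤ 1 * z^(n+1) :=
          mul_le_mul_of_nonneg_right (hitProb_le_one y x (n+1)) (pow_nonneg hz0 _)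
      _ = z * z^n := by ring
      _ ≤ z * (1/2)^n := by
          apply mul_le_mul_of_nonneg_left (pow_le_pow_left₀ hz0 hz n) hz0
  calc hitGF y x z ≤ ∑' n : ℕ, z * (1/2 : ℝ)^n := h1
    _ = z * 2 := by rw [tsum_mul_left, tsum_geometric_two]
    _ = 2 * z := by ring

lemma hitGF_sub_bound (y x : ℤ) (hyx : y ≠ x) {z : ℝ} (hz0 : 0 ≤ z) (hz : z ≤ 1/2) :
    |hitGF y x z - ((2:ℝ)^((x - y).natAbs))⁻¹ * z^((x - y).natAbs)|
      ≤ 2^((x - y).natAbs + 1) * z^((x - y).natAbs + 1) := by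
  have hN0 : 0 < (x - y).natAbs := by
    have : x - y ≠ 0 := by omega
    simpa using Int.natAbs_pos.mpr this
  obtain ⟨P, hP⟩ : ∃ P, (x - y).natAbs = P + 1 := ⟨(x - y).natAbs - 1, by omega⟩
  rw [hP]
  set c : ℝ := ((2:ℝ)^(P+1))⁻¹ * z^(P+1) with hc
  have hFmin : hitProb y x (P+1) = ((2:ℝ)^(P+1))⁻¹ := by
    have h := hitProb_min y x hyx
    rw [hP] at h
    rw [h, zpow_neg, zpow_natCast]
  have hs1 := summable_aux y x hz0 hz
  have hs2 : Summable (fun n : ℕ => if n = P then c else 0) := by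
    apply summable_of_ne_finset_zero (s := {P})
    intro b hb
    simp only [Finset.mem_singleton] at hb
    simp [hb]
  have key : hitGF y x z - c
      = ∑' n : ℕ, (hitProb y x (n+1) * z^(n+1) - if n = P then c else 0) := by
    rw [Summable.tsum_sub hs1 hs2, tsum_ite_eq, hitGF]
  have hsb : Summable (fun n : ℕ => 2^(P+1) * z^(P+2) * (1/2 : ℝ)^n) :=
    summable_geometric_two.mul_left _
  have hbound : ∀ n : ℕ,
      |hitProb y x (n+1) * z^(n+1) - if n = P then c else 0|
        ≤ 2^(P+1) * z^(P+2) * (1/2)^n := by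
    intro n
    rcases lt_trichotomy n P with h | h | h
    · rw [if_neg h.ne, hitProb_eq_zero y x (n+1) (by omega)]
      simp only [zero_mul, sub_zero, abs_zero]
      positivity
    · subst h
      rw [if_pos rfl, hFmin, hc, sub_self, abs_zero]
      positivity
    · rw [if_neg h.ne', sub_zero,
        abs_of_nonneg (mul_nonneg (hitProb_nonneg _ _ _) (pow_nonneg hz0 _))]
      have e1 : z^(n+1) = z^(P+2) * z^(n - (P+1)) := by
        rw [← pow_add]; congr 1; omega
      have e2 : ((1:ℝ)/2)^(n - (P+1)) = 2^(P+1) * (1/2)^n := by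
        have h3 : ((1:ℝ)/2)^n = (1/2)^(n - (P+1)) * (1/2)^(P+1) := by
          rw [← pow_add]; congr 1; omega
        rw [h3]; rw [div_pow, div_pow]; field_simp; simp
      calc hitProb y x (n+1) * z^(n+1) ≤ 1 * z^(n+1) :=
            mul_le_mul_of_nonneg_right (hitProb_le_one y x (n+1)) (pow_nonneg hz0 _)
        _ = z^(P+2) * z^(n-(P+1)) := by rw [one_mul, e1]
        _ ≤ z^(P+2) * (1/2)^(n-(P+1)) :=
            mul_le_mul_of_nonneg_left (pow_le_pow_left₀ hz0 hz _) (pow_nonneg hz0 _)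
        _ = 2^(P+1) * z^(P+2) * (1/2)^n := by rw [e2]; ring
  have hv : ∑' n : ℕ, 2^(P+1) * z^(P+2) * (1/2 : ℝ)^n = 2^(P+1) * z^(P+2) * 2 := by
    rw [tsum_mul_left, tsum_geometric_two]
  rw [key, abs_le]
  refine ⟨?_, ?_⟩
  · have h4 := Summable.tsum_le_tsum (fun n => (abs_le.mp (hbound n)).1) hsb.neg (hs1.sub hs2)
    rw [tsum_neg, hv] at h4
    calc -(2^(P+1+1) * z^(P+1+1)) = -(2^(P+1) * z^(P+2) * 2) := by ring
      _ ≤ _ := h4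
  · have h4 := Summable.tsum_le_tsum (fun n => (abs_le.mp (hbound n)).2) (hs1.sub hs2) hsb
    rw [hv] at h4
    exact h4.trans_eq (by ring)

lemma tendsto_one_sub : Tendsto (fun r : ℝ => 1 - r)
    (nhdsWithin 1 (Set.Iio 1)) (nhdsWithin 0 (Set.Ioi 0)) := by
  rw [tendsto_nhdsWithin_iff]
  constructor
  · have h : Tendsto (fun r : ℝ => 1 - r) (nhds 1) (nhds 0) := by
      have hc : Continuous (fun r : ℝ => 1 - r) := by fun_prop
      simpa using hc.tendsto 1
    exact h.mono_left nhdsWithin_le_nhds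
  · filter_upwards [self_mem_nhdsWithin] with r hr
    simp only [Set.mem_Iio] at hr
    simp only [Set.mem_Ioi]
    linarith

lemma hitGF_tendsto_zero (y x : ℤ) :
    Tendsto (fun z => hitGF y x z) (nhdsWithin 0 (Set.Ioi 0)) (nhds 0) := by
  have hev : ∀ᶠ z in nhdsWithin (0:ℝ) (Set.Ioi 0), ‖hitGF y x z‖ ≤ 2 * z := by
    have h2 : ∀ᶠ z in nhdsWithin (0:ℝ) (Set.Ioi 0), |z| < 1/2 :=
      ((eventually_abs_sub_lt (0:ℝ) (by norm_num : (0:ℝ) < 1/2)).mono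
        (by intro z h; simpa using h)).filter_mono nhdsWithin_le_nhds
    filter_upwards [h2, self_mem_nhdsWithin] with z hz2 hz0
    simp only [Set.mem_Ioi] at hz0
    have hzle : z ≤ 1/2 := by rw [abs_lt] at hz2; linarith
    rw [Real.norm_eq_abs, abs_of_nonneg (hitGF_nonneg y x hz0.le)]
    exact hitGF_le y x hz0.le hzle
  have hg : Tendsto (fun z : ℝ => 2 * z) (nhdsWithin 0 (Set.Ioi 0)) (nhds 0) := by
    have : Tendsto (fun z : ℝ => 2 * z) (nhds 0) (nhds 0) := by
      have hc : Continuous (fun z : ℝ => 2 * z) := by fun_prop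
      simpa using hc.tendsto 0
    exact this.mono_left nhdsWithin_le_nhds
  exact squeeze_zero_norm' hev hg

lemma hitGF_div_tendsto (y x : ℤ) (hyx : y ≠ x) :
    Tendsto (fun z => hitGF y x z / z ^ ((x - y).natAbs))
      (nhdsWithin 0 (Set.Ioi 0)) (nhds (((2:ℝ) ^ ((x - y).natAbs))⁻¹)) := by
  set N := (x - y).natAbs with hN
  rw [← tendsto_sub_nhds_zero_iff]
  have hev : ∀ᶠ z in nhdsWithin (0:ℝ) (Set.Ioi 0),
      ‖hitGF y x z / z ^ N - ((2:ℝ) ^ N)⁻¹‖ ≤ 2 ^ (N+1) * z := by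
    have h2 : ∀ᶠ z in nhdsWithin (0:ℝ) (Set.Ioi 0), |z| < 1/2 :=
      ((eventually_abs_sub_lt (0:ℝ) (by norm_num : (0:ℝ) < 1/2)).mono
        (by intro z h; simpa using h)).filter_mono nhdsWithin_le_nhds
    filter_upwards [h2, self_mem_nhdsWithin] with z hz2 hz0
    simp only [Set.mem_Ioi] at hz0
    have hzle : z ≤ 1/2 := by rw [abs_lt] at hz2; linarith
    have hzN : z ^ N ≠ 0 := pow_ne_zero _ hz0.ne'
    have heq : hitGF y x z / z ^ N - ((2:ℝ) ^ N)⁻¹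
        = (hitGF y x z - ((2:ℝ) ^ N)⁻¹ * z ^ N) / z ^ N := by
      rw [sub_div, mul_div_assoc, div_self hzN, mul_one]
    rw [Real.norm_eq_abs, heq, abs_div, abs_of_pos (pow_pos hz0 N),
      div_le_iff₀ (pow_pos hz0 N)]
    calc |hitGF y x z - ((2:ℝ) ^ N)⁻¹ * z ^ N| ≤ 2 ^ (N+1) * z ^ (N+1) :=
          hitGF_sub_bound y x hyx hz0.le hzle
      _ = 2 ^ (N+1) * z * z ^ N := by ring
  have hg : Tendsto (fun z : ℝ => 2 ^ (N+1) * z) (nhdsWithin 0 (Set.Ioi 0)) (nhds 0) := by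
    have : Tendsto (fun z : ℝ => 2 ^ (N+1) * z) (nhds 0) (nhds 0) := by
      have hc : Continuous (fun z : ℝ => 2 ^ (N+1) * z) := by fun_prop
      simpa using hc.tendsto 0
    exact this.mono_left nhdsWithin_le_nhds
  exact squeeze_zero_norm' hev hg

lemma aux_eq (u G r z : ℝ) (N : ℕ) :
    (u / (r * G)) / ((2 / z) ^ N) = u / (r * (2 ^ N * (G / z ^ N))) := by
  rw [div_pow]
  simp only [div_eq_mul_inv, mul_inv, inv_inv]
  ring

/-- for the simple symmetric random walk on ℤ, the probability of
first hitting `x` from `x_r ≠ x` in exactly `|x - x_r|` steps is `2^{-|x-x_r|}`,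
and consequently `⟨τ_r⟩ ~ (2/(1-r))^{|x-x_r|}` as `r → 1⁻`, where
`⟨τ_r⟩ = (1 - F̃(x,1-r|x₀))/(r F̃(x,1-r|x_r))`. -/
theorem stmt_7 (x xr x₀ : ℤ) (hxr : xr ≠ x) (hx₀ : x₀ ≠ x) :
    hitProb xr x (x - xr).natAbs = 2 ^ (-((x - xr).natAbs : ℤ)) ∧
    Tendsto (fun r : ℝ =>
        ((1 - hitGF x₀ x (1 - r)) / (r * hitGF xr x (1 - r))) /
          (2 / (1 - r)) ^ (x - xr).natAbs)
      (nhdsWithin 1 (Set.Iio 1)) (nhds 1) := by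
  refine ⟨hitProb_min xr x hxr, ?_⟩
  set N := (x - xr).natAbs with hN
  have hA : Tendsto (fun r : ℝ => hitGF x₀ x (1 - r))
      (nhdsWithin 1 (Set.Iio 1)) (nhds 0) :=
    (hitGF_tendsto_zero x₀ x).comp tendsto_one_sub
  have hu : Tendsto (fun r : ℝ => 1 - hitGF x₀ x (1 - r))
      (nhdsWithin 1 (Set.Iio 1)) (nhds 1) := by
    have := (tendsto_const_nhds (x := (1:ℝ))).sub hA
    simpa using this
  have hv : Tendsto (fun r : ℝ => hitGF xr x (1 - r) / (1 - r) ^ N)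
      (nhdsWithin 1 (Set.Iio 1)) (nhds (((2:ℝ) ^ N)⁻¹)) :=
    (hitGF_div_tendsto xr x hxr).comp tendsto_one_sub
  have hr : Tendsto (fun r : ℝ => r) (nhdsWithin 1 (Set.Iio 1)) (nhds 1) :=
    tendsto_id.mono_left nhdsWithin_le_nhds
  have hden : Tendsto (fun r : ℝ => r * ((2:ℝ) ^ N * (hitGF xr x (1 - r) / (1 - r) ^ N)))
      (nhdsWithin 1 (Set.Iio 1)) (nhds (1 * ((2:ℝ) ^ N * ((2:ℝ) ^ N)⁻¹))) :=
    hr.mul (tendsto_const_nhds.mul hv)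
  have h2N : ((2:ℝ) ^ N) ≠ 0 := pow_ne_zero _ two_ne_zero
  have hone : (1:ℝ) * ((2:ℝ) ^ N * ((2:ℝ) ^ N)⁻¹) = 1 := by
    rw [mul_inv_cancel₀ h2N, one_mul]
  have htot := hu.div hden (by rw [hone]; exact one_ne_zero)
  rw [hone] at htot
  simp only [div_one] at htot
  refine Tendsto.congr (fun r => ?_) htot
  exact (aux_eq (1 - hitGF x₀ x (1 - r)) (hitGF xr x (1 - r)) r (1 - r) N).symm
end

section
/- Define the second moment of the first hitting time under resetting via the generating function expansion. Then the identity ⟨τ_r²⟩ = 2⟨τ_r⟩·[⟨τ_r(x|x_r)⟩ + 1/2] - 2(1-r)·(d/dr)⟨τ_r⟩ holds, where ⟨τ_r(x|x_r)⟩ = (1 - F̃(x,1-r|x_r))/(r F̃(x,1-r|x_r)) is the mean first hitting time when x₀ = x_r, ⟨τ_r⟩ = (1 - F̃(x,1-r|x₀))/(r F̃(x,1-r|x_r)), and F̃ is twice differentiable at 1-r with 0 < F̃(x,1-r|x_r), F̃(x,1-r|x₀) < 1. -/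
theorem aux_dd (N D N' D' N'' D'' F : ℝ → ℝ)
    (hN : ∀ z, HasDerivAt N (N' z) z) (hN' : ∀ z, HasDerivAt N' (N'' z) z)
    (hD : ∀ z, HasDerivAt D (D' z) z) (hD' : ∀ z, HasDerivAt D' (D'' z) z)
    (hD1 : D 1 ≠ 0) (hF : ∀ z, F z = N z / D z) :
    deriv (deriv F) 1 =
      ((N'' 1 * D 1 + N' 1 * D' 1 - (N' 1 * D' 1 + N 1 * D'' 1)) * (D 1) ^ 2 -
        (N' 1 * D 1 - N 1 * D' 1) * (2 * D 1 * D' 1)) / ((D 1) ^ 2) ^ 2 := by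
  have hFf : F = fun z => N z / D z := funext hF
  have hev : ∀ᶠ z in nhds 1, D z ≠ 0 := ((hD 1).continuousAt).eventually_ne hD1
  have heq : deriv F =ᶠ[nhds 1] fun z => (N' z * D z - N z * D' z) / (D z) ^ 2 := by
    filter_upwards [hev] with z hz
    have h : HasDerivAt F ((N' z * D z - N z * D' z) / (D z) ^ 2) z := by
      rw [hFf]; exact (hN z).div (hD z) hz
    exact h.deriv
  rw [heq.deriv_eq]
  have hnum : HasDerivAt (fun z => N' z * D z - N z * D' z)
      (N'' 1 * D 1 + N' 1 * D' 1 - (N' 1 * D' 1 + N 1 * D'' 1)) 1 :=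
    ((hN' 1).mul (hD 1)).sub ((hN 1).mul (hD' 1))
  have hden : HasDerivAt (fun z => (D z) ^ 2) (2 * D 1 * D' 1) 1 := by
    have h := (hD 1).fun_pow 2
    refine h.congr_deriv ?_
    push_cast
    ring
  exact (hnum.div hden (pow_ne_zero 2 hD1)).deriv

/-- with `⟨τ_r²⟩` defined via the second-order expansion of the
resetting generating function `F̃_r` at `z = 1`, i.e.
`⟨τ_r²⟩ = F̃_r''(1) + ⟨τ_r⟩`, the identity
`⟨τ_r²⟩ = 2⟨τ_r⟩[⟨τ_r(x|x_r)⟩ + 1/2] - 2(1-r) d⟨τ_r⟩/dr` holds. -/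
theorem stmt_8 (F0 Fr F0' Fr' F0'' Fr'' : ℝ → ℝ) (r : ℝ)
    (hr0 : 0 < r) (hr1 : r < 1)
    (hF0d : ∀ z, HasDerivAt F0 (F0' z) z) (hF0d2 : ∀ z, HasDerivAt F0' (F0'' z) z)
    (hFrd : ∀ z, HasDerivAt Fr (Fr' z) z) (hFrd2 : ∀ z, HasDerivAt Fr' (Fr'' z) z)
    (hF0' : ContinuousAt F0'' (1 - r)) (hFr' : ContinuousAt Fr'' (1 - r))
    (hFrpos : 0 < Fr (1 - r)) (hFrlt : Fr (1 - r) < 1)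
    (hF0pos : 0 < F0 (1 - r)) (hF0lt : F0 (1 - r) < 1)
    (τ τm Fres : ℝ → ℝ)
    (hτ : ∀ s, τ s = (1 - F0 (1 - s)) / (s * Fr (1 - s)))
    (hτm : ∀ s, τm s = (1 - Fr (1 - s)) / (s * Fr (1 - s)))
    (hFres : ∀ z, Fres z =
      ((1 - z) * F0 ((1 - r) * z) + r * z * Fr ((1 - r) * z)) /
        (1 - z + r * z * Fr ((1 - r) * z))) :
    deriv (deriv Fres) 1 + τ r = 2 * τ r * (τm r + 1 / 2) - 2 * (1 - r) * deriv τ r := by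
  -- chain rule helper
  have key : ∀ (G G' : ℝ → ℝ), (∀ y, HasDerivAt G (G' y) y) →
      ∀ z : ℝ, HasDerivAt (fun z => G ((1 - r) * z)) (G' ((1 - r) * z) * (1 - r)) z := by
    intro G G' hG z
    have h1 : HasDerivAt (fun z : ℝ => (1 - r) * z) ((1 - r) * 1) z :=
      (hasDerivAt_id z).const_mul (1 - r)
    have h2 := (hG ((1 - r) * z)).comp z h1
    simpa [Function.comp_def] using h2
  have hNd : ∀ z, HasDerivAt
      (fun z => (1 - z) * F0 ((1 - r) * z) + r * z * Fr ((1 - r) * z))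
      (-(F0 ((1 - r) * z)) + (1 - z) * (F0' ((1 - r) * z) * (1 - r)) +
        (r * Fr ((1 - r) * z) + r * z * (Fr' ((1 - r) * z) * (1 - r)))) z := by
    intro z
    have h := (((hasDerivAt_id z).const_sub 1).fun_mul (key F0 F0' hF0d z)).fun_add
      (((hasDerivAt_id z).const_mul r).fun_mul (key Fr Fr' hFrd z))
    refine h.congr_deriv ?_
    simp only [id_eq]
    ring
  have hDd : ∀ z, HasDerivAt
      (fun z => 1 - z + r * z * Fr ((1 - r) * z))
      (-1 + (r * Fr ((1 - r) * z) + r * z * (Fr' ((1 - r) * z) * (1 - r)))) z := by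
    intro z
    have h := ((hasDerivAt_id z).const_sub 1).fun_add
      (((hasDerivAt_id z).const_mul r).fun_mul (key Fr Fr' hFrd z))
    refine h.congr_deriv ?_
    simp only [id_eq]
    ring
  have hN1d : ∀ z, HasDerivAt
      (fun z => -(F0 ((1 - r) * z)) + (1 - z) * (F0' ((1 - r) * z) * (1 - r)) +
        (r * Fr ((1 - r) * z) + r * z * (Fr' ((1 - r) * z) * (1 - r))))
      (-(F0' ((1 - r) * z) * (1 - r)) +
        (-(F0' ((1 - r) * z) * (1 - r)) + (1 - z) * (F0'' ((1 - r) * z) * (1 - r) * (1 - r))) +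
        (r * (Fr' ((1 - r) * z) * (1 - r)) +
          (r * (Fr' ((1 - r) * z) * (1 - r)) + r * z * (Fr'' ((1 - r) * z) * (1 - r) * (1 - r))))) z := by
    intro z
    have h := (((key F0 F0' hF0d z).fun_neg).fun_add
        (((hasDerivAt_id z).const_sub 1).fun_mul ((key F0' F0'' hF0d2 z).mul_const (1 - r)))).fun_add
      (((key Fr Fr' hFrd z).const_mul r).fun_add
        (((hasDerivAt_id z).const_mul r).fun_mul ((key Fr' Fr'' hFrd2 z).mul_const (1 - r))))
    refine h.congr_deriv ?_
    simp only [id_eq]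
    ring
  have hD1d : ∀ z, HasDerivAt
      (fun z => -1 + (r * Fr ((1 - r) * z) + r * z * (Fr' ((1 - r) * z) * (1 - r))))
      (r * (Fr' ((1 - r) * z) * (1 - r)) +
        (r * (Fr' ((1 - r) * z) * (1 - r)) + r * z * (Fr'' ((1 - r) * z) * (1 - r) * (1 - r)))) z := by
    intro z
    have h := (hasDerivAt_const z (-1 : ℝ)).fun_add
      (((key Fr Fr' hFrd z).const_mul r).fun_add
        (((hasDerivAt_id z).const_mul r).fun_mul ((key Fr' Fr'' hFrd2 z).mul_const (1 - r))))
    refine h.congr_deriv ?_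
    simp only [id_eq]
    ring
  have hB : Fr (1 - r) ≠ 0 := ne_of_gt hFrpos
  have hrne : r ≠ 0 := ne_of_gt hr0
  have hD1ne : (fun z : ℝ => 1 - z + r * z * Fr ((1 - r) * z)) 1 ≠ 0 := by
    have : (fun z : ℝ => 1 - z + r * z * Fr ((1 - r) * z)) 1 = r * Fr (1 - r) := by
      norm_num
    rw [this]
    positivity
  have hmain := aux_dd _ _ _ _ _ _ Fres hNd hN1d hDd hD1d hD1ne hFres
  -- derivative of τ at r
  have hτfun : τ = fun s => (1 - F0 (1 - s)) / (s * Fr (1 - s)) := funext hτ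
  have hinner : HasDerivAt (fun s : ℝ => 1 - s) (-1) r := by
    simpa using (hasDerivAt_id r).const_sub 1
  have hF0c : HasDerivAt (fun s => F0 (1 - s)) (F0' (1 - r) * (-1)) r := by
    have h := (hF0d (1 - r)).comp r hinner
    simpa [Function.comp_def] using h
  have hFrc : HasDerivAt (fun s => Fr (1 - s)) (Fr' (1 - r) * (-1)) r := by
    have h := (hFrd (1 - r)).comp r hinner
    simpa [Function.comp_def] using h
  have hu : HasDerivAt (fun s => 1 - F0 (1 - s)) (-(F0' (1 - r) * (-1))) r :=
    hF0c.const_sub 1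
  have hv : HasDerivAt (fun s => s * Fr (1 - s))
      (1 * Fr (1 - r) + r * (Fr' (1 - r) * (-1))) r :=
    (hasDerivAt_id r).mul hFrc
  have hvne : r * Fr (1 - r) ≠ 0 := mul_ne_zero hrne hB
  have hτd : HasDerivAt τ
      ((-(F0' (1 - r) * (-1)) * (r * Fr (1 - r)) -
        (1 - F0 (1 - r)) * (1 * Fr (1 - r) + r * (Fr' (1 - r) * (-1)))) /
        (r * Fr (1 - r)) ^ 2) r := by
    rw [hτfun]
    exact hu.div hv hvne
  rw [hmain, hτ r, hτm r, hτd.deriv]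
  simp only [mul_one]
  field_simp
  ring
end

section
/- In the transient case, where F̃(x,z|x₀) → R₀ and F̃(x,z|x_r) → R_r as z → 1⁻ with 0 < R₀ < 1 and 0 < R_r < 1, the ratio of the standard deviation to the mean of the first hitting time under resetting converges as r → 0⁺: σ_r/⟨τ_r⟩ → √((1 + R₀)/(1 - R₀)). In particular this limit is strictly greater than 1. -/
open Filter

private lemma sqrt_div_pos_aux {A t : ℝ} (ht : 0 < t) :
    Real.sqrt A / t = Real.sqrt (A / t ^ 2) := by
  rcases le_or_gt 0 A with hA | hA
  · rw [Real.sqrt_div hA, Real.sqrt_sq ht.le]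
  · rw [Real.sqrt_eq_zero_of_nonpos hA.le, Real.sqrt_eq_zero_of_nonpos, zero_div]
    exact div_nonpos_of_nonpos_of_nonneg hA.le (sq_nonneg t)

/-- transient case: if `F̃(x,z|x₀) → R₀` and `F̃(x,z|x_r) → R_r` as
`z → 1⁻` with `0 < R₀ < 1`, `0 < R_r < 1`, and the derivatives of the generating
functions stay bounded, then `σ_r/⟨τ_r⟩ → √((1+R₀)/(1-R₀)) > 1` as `r → 0⁺`, where
`σ_r² = ⟨τ_r²⟩ - ⟨τ_r⟩²` and `⟨τ_r⟩`, `⟨τ_r²⟩` are given by the renewal formulas. -/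
theorem stmt_10 (F0 Fr F0' Fr' : ℝ → ℝ) (R0 Rr : ℝ)
    (hF0 : Tendsto F0 (nhdsWithin 1 (Set.Iio 1)) (nhds R0))
    (hFr : Tendsto Fr (nhdsWithin 1 (Set.Iio 1)) (nhds Rr))
    (hR00 : 0 < R0) (hR01 : R0 < 1) (hRr0 : 0 < Rr) (hRr1 : Rr < 1)
    (hbnd : ∃ C : ℝ, ∀ᶠ z in nhdsWithin 1 (Set.Iio 1), |F0' z| ≤ C ∧ |Fr' z| ≤ C)
    (τ τ2 σ : ℝ → ℝ)
    (hτ : ∀ r, τ r = (1 - F0 (1 - r)) / (r * Fr (1 - r)))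
    (hτ2 : ∀ r, τ2 r = 2 * τ r *
      ((1 - r * Fr (1 - r)) / (r * Fr (1 - r))
        - (1 - r) * Fr' (1 - r) / Fr (1 - r) + 1 / 2
        - (1 - r) * F0' (1 - r) / (1 - F0 (1 - r))))
    (hσ : ∀ r, σ r = Real.sqrt (τ2 r - (τ r) ^ 2)) :
    Tendsto (fun r => σ r / τ r) (nhdsWithin 0 (Set.Ioi 0))
        (nhds (Real.sqrt ((1 + R0) / (1 - R0)))) ∧
      1 < Real.sqrt ((1 + R0) / (1 - R0)) := by
  obtain ⟨C, hC⟩ := hbnd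
  set l : Filter ℝ := nhdsWithin 0 (Set.Ioi 0) with hl
  have hmap : Tendsto (fun r : ℝ => 1 - r) l (nhdsWithin 1 (Set.Iio 1)) := by
    apply tendsto_nhdsWithin_of_tendsto_nhds_of_eventually_within
    · have : Tendsto (fun r : ℝ => 1 - r) (nhds 0) (nhds 1) :=
        ((continuous_const (y := (1:ℝ))).sub continuous_id).tendsto' 0 1 (by norm_num)
      exact this.mono_left nhdsWithin_le_nhds
    · filter_upwards [self_mem_nhdsWithin] with r hr
      simp only [Set.mem_Iio]
      linarith [Set.mem_Ioi.mp hr]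
  have ha : Tendsto (fun r => F0 (1 - r)) l (nhds R0) := hF0.comp hmap
  have hb : Tendsto (fun r => Fr (1 - r)) l (nhds Rr) := hFr.comp hmap
  have hC' : ∀ᶠ r in l, |F0' (1 - r)| ≤ C ∧ |Fr' (1 - r)| ≤ C := hmap.eventually hC
  -- eventual positivity / bounds
  have hapos : ∀ᶠ r in l, (1 - R0) / 2 < 1 - F0 (1 - r) := by
    have := ha.eventually (eventually_lt_nhds (show R0 < (1 + R0)/2 by linarith))
    filter_upwards [this] with r hr; linarith
  have hbpos : ∀ᶠ r in l, Rr / 2 < Fr (1 - r) := by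
    have := hb.eventually (eventually_gt_nhds (show Rr/2 < Rr by linarith))
    exact this
  have hbub : ∀ᶠ r in l, |Fr (1 - r)| ≤ |Rr| + 1 :=
    hb.abs.eventually (eventually_le_nhds (show |Rr| < |Rr| + 1 by linarith))
  have hr01 : ∀ᶠ r in l, 0 < r ∧ r < 1 := by
    filter_upwards [self_mem_nhdsWithin,
      eventually_nhdsWithin_of_eventually_nhds (eventually_lt_nhds one_pos)] with r h1 h2
    exact ⟨h1, h2⟩
  -- basic limits
  have hr0 : Tendsto (fun r : ℝ => r) l (nhds 0) := tendsto_id.mono_right nhdsWithin_le_nhds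
  have hrb : Tendsto (fun r => r * Fr (1 - r)) l (nhds 0) := by
    simpa using hr0.mul hb
  have h1rb : Tendsto (fun r => 1 - r * Fr (1 - r)) l (nhds 1) := by
    simpa using tendsto_const_nhds.sub hrb
  have ha1 : Tendsto (fun r => 1 - F0 (1 - r)) l (nhds (1 - R0)) :=
    tendsto_const_nhds.sub ha
  have ha1ne : (1 - R0) ≠ 0 := by linarith
  set C1 : ℝ := |C| + 1 with hC1
  have hCle : C ≤ C1 := by
    have := le_abs_self C; simp [hC1]; linarith
  have ht2 : Tendsto (fun r => r * (1 - r) * Fr' (1 - r)) l (nhds 0) := by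
    refine squeeze_zero_norm' ?_
      (show Tendsto (fun r => C1 * r) l (nhds 0) by simpa using (tendsto_const_nhds (x := C1)).mul hr0)
    · filter_upwards [hr01, hC'] with r hr hc
      have h1 : |r * (1 - r) * Fr' (1 - r)| = r * (1 - r) * |Fr' (1 - r)| := by
        rw [abs_mul, abs_mul, abs_of_pos hr.1, abs_of_pos (by linarith : (0:ℝ) < 1 - r)]
      rw [Real.norm_eq_abs, h1]
      have hb' : |Fr' (1 - r)| ≤ C1 := le_trans hc.2 hCle
      have hC1nn : (0:ℝ) ≤ C1 := by rw [hC1]; positivity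
      have : r * (1 - r) * |Fr' (1 - r)| ≤ r * 1 * C1 :=
        mul_le_mul (mul_le_mul_of_nonneg_left (by linarith) hr.1.le) hb' (abs_nonneg _)
          (mul_nonneg hr.1.le zero_le_one)
      linarith [this]
  have ht4 : Tendsto (fun r => r * (1 - r) * F0' (1 - r) * Fr (1 - r)) l (nhds 0) := by
    refine squeeze_zero_norm' ?_
      (show Tendsto (fun r => C1 * (|Rr| + 1) * r) l (nhds 0) by
        simpa using (tendsto_const_nhds (x := C1 * (|Rr| + 1))).mul hr0)
    · filter_upwards [hr01, hC', hbub] with r hr hc hub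
      have h1 : |r * (1 - r) * F0' (1 - r) * Fr (1 - r)|
          = r * (1 - r) * |F0' (1 - r)| * |Fr (1 - r)| := by
        rw [abs_mul, abs_mul, abs_mul, abs_of_pos hr.1,
          abs_of_pos (by linarith : (0:ℝ) < 1 - r)]
      rw [Real.norm_eq_abs, h1]
      have ha' : |F0' (1 - r)| ≤ C1 := le_trans hc.1 hCle
      have hC1nn : (0:ℝ) ≤ C1 := by rw [hC1]; positivity
      calc r * (1 - r) * |F0' (1 - r)| * |Fr (1 - r)|
          ≤ r * 1 * C1 * (|Rr| + 1) :=
            mul_le_mul (mul_le_mul (mul_le_mul_of_nonneg_left (by linarith) hr.1.le) ha'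
              (abs_nonneg _) (mul_nonneg hr.1.le zero_le_one)) hub (abs_nonneg _)
              (mul_nonneg (mul_nonneg hr.1.le zero_le_one) hC1nn)
        _ = C1 * (|Rr| + 1) * r := by ring
  have ht4' : Tendsto (fun r => r * (1 - r) * F0' (1 - r) * Fr (1 - r) / (1 - F0 (1 - r)))
      l (nhds 0) := by
    have := ht4.div ha1 ha1ne
    rw [zero_div] at this
    exact this
  -- numerator tends to 1
  have hnum : Tendsto (fun r => (1 - r * Fr (1 - r)) - r * (1 - r) * Fr' (1 - r)
      + r * Fr (1 - r) / 2
      - r * (1 - r) * F0' (1 - r) * Fr (1 - r) / (1 - F0 (1 - r))) l (nhds 1) := by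
    have h3 : Tendsto (fun r => r * Fr (1 - r) / 2) l (nhds 0) := by
      simpa using hrb.div_const 2
    have := ((h1rb.sub ht2).add h3).sub ht4'
    simpa using this
  set L : ℝ := (1 + R0) / (1 - R0) with hLdef
  have hg : Tendsto (fun r => τ2 r / τ r ^ 2 - 1) l (nhds L) := by
    apply Tendsto.congr' _ (show Tendsto (fun r => 2 * ((1 - r * Fr (1 - r))
        - r * (1 - r) * Fr' (1 - r) + r * Fr (1 - r) / 2
        - r * (1 - r) * F0' (1 - r) * Fr (1 - r) / (1 - F0 (1 - r))) / (1 - F0 (1 - r)) - 1)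
        l (nhds L) from ?_)
    · filter_upwards [hr01, hapos, hbpos] with r hr ha' hb'
      have hrne : r ≠ 0 := ne_of_gt hr.1
      have hbne : Fr (1 - r) ≠ 0 := by nlinarith [hb']
      have hane : 1 - F0 (1 - r) ≠ 0 := by nlinarith [ha']
      rw [hτ2, hτ]
      field_simp
    · have : Tendsto (fun r => 2 * ((1 - r * Fr (1 - r))
          - r * (1 - r) * Fr' (1 - r) + r * Fr (1 - r) / 2
          - r * (1 - r) * F0' (1 - r) * Fr (1 - r) / (1 - F0 (1 - r))) / (1 - F0 (1 - r)) - 1)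
          l (nhds (2 * 1 / (1 - R0) - 1)) :=
        ((tendsto_const_nhds.mul hnum).div ha1 ha1ne).sub tendsto_const_nhds
      have heq : 2 * 1 / (1 - R0) - 1 = L := by
        rw [hLdef]; field_simp; ring
      rwa [heq] at this
  have hL1 : 1 < L := by
    rw [hLdef, lt_div_iff₀ (by linarith)]; linarith
  have hsq1 : 1 < Real.sqrt L := by
    rw [show (1:ℝ) = Real.sqrt 1 by simp]
    exact Real.sqrt_lt_sqrt (by norm_num) (by simpa using hL1)
  refine ⟨?_, hsq1⟩
  have hmain : Tendsto (fun r => Real.sqrt (τ2 r / τ r ^ 2 - 1)) l (nhds (Real.sqrt L)) :=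
    hg.sqrt
  apply Tendsto.congr' _ hmain
  filter_upwards [hr01, hapos, hbpos] with r hr ha' hb'
  have hτpos : 0 < τ r := by
    rw [hτ]
    apply div_pos (by linarith) (by nlinarith)
  rw [hσ, sqrt_div_pos_aux hτpos]
  congr 1
  rw [sub_div, div_self (pow_ne_zero 2 (ne_of_gt hτpos))]
end

section
/- For all integers k and real ν > 0 and |z| < 1, the integral ∫₀^{2π} e^{iqk}(1 - z cos q)^{-ν} dq equals (2π/|k|!)·(z/2)^{|k|}·(Γ(ν+|k|)/Γ(ν))·₂F₁((ν+|k|)/2, (1+ν+|k|)/2; 1+|k|; z²). -/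
open Filter Finset

/-- Pochhammer symbol (rising factorial) `(x)_n = x(x+1)⋯(x+n-1)`. -/
noncomputable def poch (x : ℝ) (n : ℕ) : ℝ := ∏ i ∈ Finset.range n, (x + i)

lemma poch_zero (x : ℝ) : poch x 0 = 1 := Finset.prod_range_zero _

lemma poch_succ (x : ℝ) (n : ℕ) : poch x (n+1) = poch x n * (x + n) :=
  Finset.prod_range_succ _ _

lemma poch_pos {x : ℝ} (hx : 0 < x) (n : ℕ) : 0 < poch x n :=
  Finset.prod_pos (fun i _ => by positivity)

lemma poch_add (x : ℝ) (a b : ℕ) : poch x (a + b) = poch x a * poch (x + a) b := by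
  induction b with
  | zero => simp [poch_zero]
  | succ b ih =>
      rw [← add_assoc, poch_succ, ih, poch_succ]
      push_cast
      ring

lemma poch_dup (x : ℝ) (p : ℕ) :
    poch x (2 * p) = 4 ^ p * poch (x / 2) p * poch ((x + 1) / 2) p := by
  induction p with
  | zero => simp [poch_zero]
  | succ p ih =>
      have h2 : 2 * (p + 1) = (2 * p) + 1 + 1 := by ring
      rw [h2, poch_succ, poch_succ, ih, poch_succ, poch_succ]
      push_cast
      ring

lemma factorial_eq_poch (m p : ℕ) :
    ((m + p).factorial : ℝ) = (m.factorial : ℝ) * poch (1 + m) p := by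
  induction p with
  | zero => simp [poch_zero]
  | succ p ih =>
      have : m + (p + 1) = (m + p) + 1 := by ring
      rw [this, Nat.factorial_succ, poch_succ]
      push_cast
      rw [ih]
      ring

lemma Gamma_ratio {ν : ℝ} (hν : 0 < ν) (m : ℕ) :
    Real.Gamma (ν + m) = Real.Gamma ν * poch ν m := by
  induction m with
  | zero => simp [poch_zero]
  | succ m ih =>
      have h1 : ν + (m + 1 : ℕ) = (ν + m) + 1 := by push_cast; ring
      have h2 : ν + (m : ℝ) ≠ 0 := by positivity
      rw [h1, Real.Gamma_add_one h2, ih, poch_succ]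
      ring
open Filter

variable {ν : ℝ}

example : Tendsto (fun n : ℕ => 1/((n:ℝ)+1)) atTop (nhds 0) :=
  tendsto_one_div_add_atTop_nhds_zero_nat

-- ratio tendsto
lemma ratio_tendsto (ν r : ℝ) :
    Tendsto (fun n : ℕ => (ν + n)/((n:ℝ)+1) * r) atTop (nhds r) := by
  have h1 : Tendsto (fun n : ℕ => ((ν-1) * (1/((n:ℝ)+1)) + 1) * r) atTop (nhds r) := by
    have := (tendsto_one_div_add_atTop_nhds_zero_nat.const_mul (ν-1)).add_const 1
    simpa using this.mul_const r
  refine h1.congr (fun n => ?_)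
  have hn : ((n:ℝ)+1) ≠ 0 := by positivity
  field_simp
  ring

lemma ratio_tendsto' (ν r : ℝ) :
    Tendsto (fun n : ℕ => (ν + n)/(n:ℝ) * r) atTop (nhds r) := by
  have h1 : Tendsto (fun n : ℕ => (ν * (1/(n:ℝ)) + 1) * r) atTop (nhds r) := by
    have := (tendsto_one_div_atTop_nhds_zero_nat.const_mul ν).add_const 1
    simpa using this.mul_const r
  have h2 : ∀ᶠ n : ℕ in atTop, (ν * (1/(n:ℝ)) + 1) * r = (ν + n)/(n:ℝ) * r := by
    filter_upwards [eventually_ge_atTop 1] with n hn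
    have hn : (n:ℝ) ≠ 0 := by positivity
    field_simp
  exact h1.congr' h2

lemma poch_succ_div (hν : 0 < ν) (n : ℕ) :
    poch ν (n+1) / (n+1).factorial = poch ν n / n.factorial * ((ν + n)/((n:ℝ)+1)) := by
  rw [poch_succ, Nat.factorial_succ]
  push_cast
  rw [div_mul_div_comm]
  ring_nf

lemma summable_c (hν : 0 < ν) {r : ℝ} (hr0 : 0 ≤ r) (hr : r < 1) :
    Summable (fun n : ℕ => poch ν n / n.factorial * r ^ n) := by
  apply summable_of_ratio_norm_eventually_le (r := (1+r)/2) (by linarith)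
  have hev := (ratio_tendsto ν r).eventually_lt_const (by linarith : r < (1+r)/2)
  filter_upwards [hev] with n hn
  have hc : 0 < poch ν n / n.factorial := by
    have := poch_pos hν n
    positivity
  have hq : 0 ≤ (ν + n)/((n:ℝ)+1) * r := by positivity
  have he : poch ν (n+1) / (n+1).factorial * r ^ (n+1)
      = (poch ν n / n.factorial * r ^ n) * ((ν + n)/((n:ℝ)+1) * r) := by
    rw [poch_succ_div hν, pow_succ]; ring
  rw [he]
  rw [Real.norm_eq_abs, Real.norm_eq_abs, abs_mul]
  have : |poch ν n / n.factorial * r ^ n| * |(ν + n)/((n:ℝ)+1) * r|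
      ≤ |poch ν n / n.factorial * r ^ n| * ((1+r)/2) := by
    apply mul_le_mul_of_nonneg_left _ (abs_nonneg _)
    rw [abs_of_nonneg hq]; exact hn.le
  linarith [this]

lemma summable_c' (hν : 0 < ν) {r : ℝ} (hr0 : 0 ≤ r) (hr : r < 1) :
    Summable (fun n : ℕ => poch ν n / n.factorial * (n * r ^ (n-1))) := by
  apply summable_of_ratio_norm_eventually_le (r := (1+r)/2) (by linarith)
  have hev := (ratio_tendsto' ν r).eventually_lt_const (by linarith : r < (1+r)/2)
  filter_upwards [hev, eventually_ge_atTop 1] with n hn hn1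
  have hc : 0 < poch ν n / n.factorial := by
    have := poch_pos hν n
    positivity
  have hq : 0 ≤ (ν + n)/(n:ℝ) * r := by positivity
  have hnR : (n:ℝ) ≠ 0 := by
    have : (1:ℝ) ≤ n := by exact_mod_cast hn1
    linarith
  have he : poch ν (n+1) / (n+1).factorial * (((n:ℝ)+1) * r ^ n)
      = (poch ν n / n.factorial * (n * r ^ (n-1))) * ((ν + n)/(n:ℝ) * r) := by
    rw [poch_succ_div hν]
    have hp : r ^ n = r ^ (n-1) * r := by
      conv_lhs => rw [show n = (n-1)+1 by omega]
      rw [pow_succ]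
    rw [hp]
    field_simp
  have he2 : poch ν (n+1) / (n+1).factorial * (((n:ℕ)+1 : ℕ) * r ^ ((n+1)-1))
      = (poch ν n / n.factorial * (n * r ^ (n-1))) * ((ν + n)/(n:ℝ) * r) := by
    push_cast
    simpa using he
  rw [he2, Real.norm_eq_abs, Real.norm_eq_abs, abs_mul]
  have : |poch ν n / n.factorial * (n * r ^ (n-1))| * |(ν + n)/(n:ℝ) * r|
      ≤ |poch ν n / n.factorial * (n * r ^ (n-1))| * ((1+r)/2) := by
    apply mul_le_mul_of_nonneg_left _ (abs_nonneg _)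
    rw [abs_of_nonneg hq]; exact hn.le
  linarith [this]

lemma hasSum_binom {ν x : ℝ} (hν : 0 < ν) (hx : |x| < 1) :
    HasSum (fun n : ℕ => poch ν n / n.factorial * x ^ n) ((1 - x) ^ (-ν)) := by
  set r : ℝ := (|x| + 1) / 2 with hr_def
  have hxr : |x| < r := by rw [hr_def]; linarith
  have hr0 : 0 ≤ r := by positivity
  have hr1 : r < 1 := by rw [hr_def]; linarith
  set c : ℕ → ℝ := fun n => poch ν n / n.factorial with hc_def
  set t : Set ℝ := Set.Ioo (-r) r with ht_def
  have ht_open : IsOpen t := isOpen_Ioo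
  have ht_conn : IsPreconnected t := (convex_Ioo _ _).isPreconnected
  have hmem : ∀ {y : ℝ}, y ∈ t → |y| < r := by
    intro y hy; rw [abs_lt]; exact ⟨hy.1, hy.2⟩
  have hrpos : 0 < r := by rw [hr_def]; positivity
  have h0t : (0:ℝ) ∈ t := ⟨by linarith, hrpos⟩
  have hxt : x ∈ t := by rw [ht_def, Set.mem_Ioo, ← abs_lt]; exact hxr
  set g : ℕ → ℝ → ℝ := fun n y => c n * y ^ n with hg_def
  set g' : ℕ → ℝ → ℝ := fun n y => c n * ((n:ℝ) * y ^ (n - 1)) with hg'_def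
  set u : ℕ → ℝ := fun n => c n * ((n:ℝ) * r ^ (n - 1)) with hu_def
  have hu : Summable u := summable_c' hν hr0 hr1
  have hcpos : ∀ n, 0 < c n := fun n => by
    have := poch_pos hν n
    rw [hc_def]; positivity
  have hg : ∀ n y, y ∈ t → HasDerivAt (g n) (g' n y) y := by
    intro n y _
    simpa [hg_def, hg'_def, mul_comm, mul_assoc, mul_left_comm] using
      (hasDerivAt_pow n y).const_mul (c n)
  have hg' : ∀ n y, y ∈ t → ‖g' n y‖ ≤ u n := by
    intro n y hy
    simp only [hg'_def, hu_def, Real.norm_eq_abs, abs_mul, abs_of_nonneg (hcpos n).le,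
      Nat.abs_cast, _root_.abs_pow]
    have hle : |y| ^ (n-1) ≤ r ^ (n-1) := pow_le_pow_left₀ (abs_nonneg y) (hmem hy).le _
    exact mul_le_mul_of_nonneg_left
      (mul_le_mul_of_nonneg_left hle (Nat.cast_nonneg n)) (hcpos n).le
  have hg0 : Summable fun n => g n 0 := by
    apply summable_of_ne_finset_zero (s := {0})
    intro n hn
    have hn0 : n ≠ 0 := by simpa using hn
    simp [hg_def, zero_pow hn0]
  set S : ℝ → ℝ := fun y => ∑' n, g n y with hS_def
  have hSderiv : ∀ y ∈ t, HasDerivAt S (∑' n, g' n y) y := fun y hy =>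
    hasDerivAt_tsum_of_isPreconnected hu ht_open ht_conn hg hg' h0t hg0 hy
  have hgsum : ∀ y ∈ t, Summable fun n => g n y := fun y hy =>
    summable_of_summable_hasDerivAt_of_isPreconnected hu ht_open ht_conn hg hg' h0t hg0 hy
  have hg'sum : ∀ y ∈ t, Summable fun n => g' n y := fun y hy =>
    Summable.of_norm_bounded hu (fun n => hg' n y hy)
  -- functional equation
  have hfe : ∀ y ∈ t, (1 - y) * (∑' n, g' n y) = ν * S y := by
    intro y hy
    have hsum := hg'sum y hy
    have h2 : ∀ n : ℕ, g' (n+1) y = c n * (ν + n) * y ^ n := by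
      intro n
      have hkey : c (n+1) * ((n:ℝ)+1) = c n * (ν + n) := by
        simp only [hc_def]
        rw [poch_succ_div hν]
        have hd : ((n:ℝ)+1) ≠ 0 := by positivity
        field_simp
      simp only [hg'_def, Nat.add_sub_cancel]
      push_cast
      calc c (n+1) * (((n:ℝ)+1) * y ^ n) = (c (n+1) * ((n:ℝ)+1)) * y ^ n := by ring
        _ = c n * (ν + n) * y ^ n := by rw [hkey]
    have h3 : ∀ n : ℕ, y * g' n y = c n * (n:ℝ) * y ^ n := by
      intro n
      rcases Nat.eq_zero_or_pos n with h | h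
      · simp [hg'_def, h]
      · have hp : y ^ n = y ^ (n-1) * y := by
          conv_lhs => rw [show n = (n-1)+1 by omega]
          rw [pow_succ]
        simp only [hg'_def]
        rw [hp]; ring
    have hA : (∑' n, g' n y) = ∑' n, c n * (ν + (n:ℝ)) * y ^ n := by
      rw [Summable.tsum_eq_zero_add hsum]
      have : g' 0 y = 0 := by simp [hg'_def]
      rw [this, zero_add]
      exact tsum_congr h2
    have hB : y * (∑' n, g' n y) = ∑' n, c n * (n:ℝ) * y ^ n := by
      rw [← tsum_mul_left]
      exact tsum_congr h3
    have s1 : Summable (fun n => c n * (ν + (n:ℝ)) * y ^ n) :=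
      (((summable_nat_add_iff 1).2 hsum).congr h2)
    have s2 : Summable (fun n => c n * (n:ℝ) * y ^ n) :=
      ((hsum.mul_left y).congr h3)
    calc (1 - y) * (∑' n, g' n y)
        = (∑' n, g' n y) - y * (∑' n, g' n y) := by ring
      _ = (∑' n, c n * (ν + (n:ℝ)) * y ^ n) - ∑' n, c n * (n:ℝ) * y ^ n := by
          rw [hB, hA]
      _ = ∑' n, (c n * (ν + (n:ℝ)) * y ^ n - c n * (n:ℝ) * y ^ n) := (Summable.tsum_sub s1 s2).symm
      _ = ∑' n, ν * g n y := by
          refine tsum_congr fun n => ?_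
          simp only [hg_def]; ring
      _ = ν * S y := by rw [tsum_mul_left]
  have hrpow : ∀ y ∈ t, (0:ℝ) < 1 - y := by
    intro y hy
    have := hmem hy
    rw [abs_lt] at this
    linarith [this.2]
  set h : ℝ → ℝ := fun y => (1 - y)^ν * S y with hh_def
  have hderiv : ∀ y ∈ t, HasDerivAt h 0 y := by
    intro y hy
    have h1y := hrpow y hy
    have hbase : HasDerivAt (fun y : ℝ => 1 - y) (-1) y := by
      simpa using (hasDerivAt_id y).const_sub 1
    have hpow : HasDerivAt (fun y : ℝ => (1 - y)^ν) ((-1) * ν * (1-y)^(ν-1)) y :=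
      hbase.rpow_const (Or.inl h1y.ne')
    have hmul := hpow.mul (hSderiv y hy)
    have hsplit : (1-y)^ν = (1-y)^(ν-1) * (1-y) := by
      conv_lhs => rw [show ν = (ν-1)+1 by ring, Real.rpow_add_one h1y.ne' (ν-1)]
    have h0 : (-1) * ν * (1-y)^(ν-1) * S y + (1 - y)^ν * (∑' n, g' n y) = 0 := by
      rw [hsplit]
      linear_combination ((1-y):ℝ)^(ν-1) * hfe y hy
    rw [h0] at hmul
    exact hmul
  have hconst : h x = h 0 := by
    have hb := (convex_Ioo (-r) r).norm_image_sub_le_of_norm_hasDerivWithin_le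
      (f := h) (f' := fun _ => (0:ℝ)) (C := 0)
      (fun y hy => (hderiv y hy).hasDerivWithinAt) (fun y hy => by simp) h0t hxt
    have h2 : ‖h x - h 0‖ ≤ 0 := by simpa using hb
    have := norm_le_zero_iff.mp h2
    exact sub_eq_zero.mp this
  have hS0 : S 0 = 1 := by
    rw [show S 0 = ∑' n, g n 0 from rfl,
      tsum_eq_single 0 (fun n hn => by simp [hg_def, zero_pow hn])]
    simp [hg_def, hc_def, poch_zero]
  have h0eq : h 0 = 1 := by
    rw [show h 0 = (1-(0:ℝ))^ν * S 0 from rfl, hS0, sub_zero, Real.one_rpow, mul_one]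
  have hSx : S x = (1-x)^(-ν) := by
    have h1x := hrpow x hxt
    have hx1 : (1-x)^ν * S x = 1 := hconst.trans h0eq
    rw [Real.rpow_neg h1x.le]
    exact eq_inv_of_mul_eq_one_left (by linarith [hx1] )
  have := (hgsum x hxt).hasSum
  rw [hS_def] at hSx
  rw [← hSx]
  exact this

lemma term_eq {ν z : ℝ} (hν : 0 < ν) (m p : ℕ) :
    poch ν (m + 2*p) / ((m + 2*p).factorial : ℝ) * z ^ (m + 2*p)
        * (((m + 2*p).choose p : ℕ) : ℝ) * (2:ℝ)⁻¹ ^ (m + 2*p) * (2 * Real.pi)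
      = (2 * Real.pi / (m.factorial : ℝ) * (z/2)^m * poch ν m)
        * (poch ((ν + m)/2) p * poch ((1 + ν + m)/2) p
            / (poch (1 + (m:ℝ)) p * (p.factorial : ℝ)) * (z^2)^p) := by
  have e1 : poch ν (m + 2*p)
      = poch ν m * (4^p * poch ((ν + (m:ℝ))/2) p * poch ((ν + (m:ℝ) + 1)/2) p) := by
    rw [poch_add, poch_dup]
  have e2 : ((m + 2*p).factorial : ℝ)
      = (((m + 2*p).choose p : ℕ) : ℝ) * (p.factorial : ℝ) * ((m + p).factorial : ℝ) := by
    have h := Nat.choose_mul_factorial_mul_factorial (show p ≤ m + 2*p by omega)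
    have h2 : m + 2*p - p = m + p := by omega
    rw [h2] at h
    exact_mod_cast h.symm
  have e3 : ((m + p).factorial : ℝ) = (m.factorial : ℝ) * poch (1 + (m:ℝ)) p :=
    factorial_eq_poch m p
  have eb : ((ν + (m:ℝ) + 1)/2) = ((1 + ν + (m:ℝ))/2) := by ring
  have ea : poch ((ν + (m:ℝ))/2) p = poch ((ν + m)/2) p := rfl
  have hch : (0:ℝ) < (((m + 2*p).choose p : ℕ) : ℝ) := by
    exact_mod_cast Nat.choose_pos (show p ≤ m + 2*p by omega)
  have hpf : (0:ℝ) < (p.factorial : ℝ) := by positivity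
  have hmf : (0:ℝ) < (m.factorial : ℝ) := by positivity
  have hpp : (0:ℝ) < poch (1 + (m:ℝ)) p := poch_pos (by positivity) p
  have hz2 : z ^ (m + 2*p) = z^m * (z^2)^p := by rw [pow_add, pow_mul]
  have h2i : (2:ℝ)⁻¹ ^ (m + 2*p) = (2:ℝ)⁻¹^m * ((2:ℝ)⁻¹^2)^p := by rw [pow_add, pow_mul]
  have h4 : (4:ℝ)^p * ((2:ℝ)⁻¹^2)^p = 1 := by
    rw [← mul_pow]
    norm_num
  rw [e1, e2, e3, eb, hz2, h2i]
  field_simp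
  ring_nf
  have h5 : (1/4:ℝ)^p * 4^p = 1 := by rw [← mul_pow]; norm_num
  linear_combination (poch ν m * poch (ν * (1 / 2) + ↑m * (1 / 2)) p * poch (1 / 2 + ν * (1 / 2) + ↑m * (1 / 2)) p * z ^ (p * 2) * z ^ m * (1/2:ℝ)^m) * h5

open Filter Finset intervalIntegral Real Complex MeasureTheory

lemma integral_exp_int (t : ℤ) :
    ∫ q in (0:ℝ)..(2 * π), Complex.exp (Complex.I * t * q)
      = if t = 0 then (2 * π : ℂ) else 0 := by
  rcases eq_or_ne t 0 with h | h
  · simp [h]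
  · rw [if_neg h]
    have hc : Complex.I * t ≠ 0 := by
      simp [Complex.I_ne_zero, Complex.ext_iff]
      exact_mod_cast h
    have hint := integral_exp_mul_complex (a := 0) (b := 2*π) hc
    simp only [mul_assoc] at hint ⊢
    rw [hint]
    have h1 : Complex.exp (Complex.I * ((t:ℂ) * (2 * (π:ℂ)))) = 1 := by
      rw [show Complex.I * ((t:ℂ) * (2 * (π:ℂ))) = (t:ℤ) * (2 * (π:ℂ) * Complex.I) by
        push_cast; ring]
      exact Complex.exp_int_mul_two_pi_mul_I t
    simp [h1]

lemma cos_pow_int (m n : ℕ) :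
    ∫ q in (0:ℝ)..(2 * π), Complex.exp (Complex.I * m * q) * (Real.cos q : ℂ) ^ n
      = ∑ j ∈ Finset.range (n+1), (n.choose j : ℂ) * (2:ℂ)⁻¹ ^ n *
          (if ((m : ℤ) + 2*j - n : ℤ) = 0 then (2 * π : ℂ) else 0) := by
  have hpt : ∀ q : ℝ, Complex.exp (Complex.I * m * q) * (Real.cos q : ℂ) ^ n
      = ∑ j ∈ Finset.range (n+1), (n.choose j : ℂ) * (2:ℂ)⁻¹ ^ n *
          Complex.exp (Complex.I * ((m : ℤ) + 2*j - n : ℤ) * q) := by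
    intro q
    have hcos : (Real.cos q : ℂ) = (2:ℂ)⁻¹ * (Complex.exp ((q:ℂ) * Complex.I)
        + Complex.exp (-((q:ℂ) * Complex.I))) := by
      have h2 := Complex.two_cos (q:ℂ)
      rw [neg_mul] at h2
      rw [Complex.ofReal_cos]
      linear_combination h2 / 2
    rw [hcos, mul_pow, add_pow]
    rw [Finset.mul_sum, Finset.mul_sum]
    refine Finset.sum_congr rfl fun j hj => ?_
    have hjn : j ≤ n := Nat.lt_succ_iff.mp (Finset.mem_range.mp hj)
    have e1 : Complex.exp ((q:ℂ) * Complex.I) ^ j = Complex.exp ((j:ℂ) * ((q:ℂ) * Complex.I)) :=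
      (Complex.exp_nat_mul _ j).symm
    have e2 : Complex.exp (-((q:ℂ) * Complex.I)) ^ (n - j)
        = Complex.exp (((n - j : ℕ):ℂ) * (-((q:ℂ) * Complex.I))) :=
      (Complex.exp_nat_mul _ (n - j)).symm
    have harg : Complex.I * (m:ℂ) * (q:ℂ)
          + ((j : ℂ) * ((q:ℂ) * Complex.I) + ((n - j : ℕ) : ℂ) * (-((q:ℂ) * Complex.I)))
        = Complex.I * (((m : ℤ) + 2*j - n : ℤ) : ℂ) * (q:ℂ) := by
      have hnj : ((n - j : ℕ) : ℂ) = (n : ℂ) - (j : ℂ) := by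
        push_cast [Nat.cast_sub hjn]
        ring
      rw [hnj]
      push_cast
      ring
    have e3 : Complex.exp (Complex.I * (m:ℂ) * (q:ℂ)) * (Complex.exp ((j:ℂ) * ((q:ℂ) * Complex.I))
          * Complex.exp (((n - j : ℕ):ℂ) * (-((q:ℂ) * Complex.I))))
        = Complex.exp (Complex.I * (((m : ℤ) + 2*j - n : ℤ):ℂ) * (q:ℂ)) := by
      rw [← Complex.exp_add, ← Complex.exp_add, harg]
    calc Complex.exp (Complex.I * (m:ℂ) * (q:ℂ)) * ((2:ℂ)⁻¹ ^ n *
            (Complex.exp ((q:ℂ) * Complex.I) ^ j * Complex.exp (-((q:ℂ) * Complex.I)) ^ (n - j)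
              * (n.choose j : ℂ)))
        = ((n.choose j : ℂ) * (2:ℂ)⁻¹ ^ n) * (Complex.exp (Complex.I * (m:ℂ) * (q:ℂ)) *
            (Complex.exp ((j:ℂ) * ((q:ℂ) * Complex.I))
              * Complex.exp (((n - j : ℕ):ℂ) * (-((q:ℂ) * Complex.I))))) := by
          rw [e1, e2]; ring
      _ = (n.choose j : ℂ) * (2:ℂ)⁻¹ ^ n
            * Complex.exp (Complex.I * (((m : ℤ) + 2*j - n : ℤ):ℂ) * (q:ℂ)) := by
          rw [e3, mul_assoc]
  rw [intervalIntegral.integral_congr (g := fun q => ∑ j ∈ Finset.range (n+1),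
      (n.choose j : ℂ) * (2:ℂ)⁻¹ ^ n * Complex.exp (Complex.I * ((m : ℤ) + 2*j - n : ℤ) * q))
      (fun q _ => hpt q)]
  rw [intervalIntegral.integral_finset_sum]
  · refine Finset.sum_congr rfl fun j hj => ?_
    rw [intervalIntegral.integral_const_mul, integral_exp_int]
  · intro j hj
    apply Continuous.intervalIntegrable
    fun_prop

/-- Gauss hypergeometric series `₂F₁(a,b;c;t) = ∑ (a)_n (b)_n / ((c)_n n!) tⁿ`. -/
noncomputable def hyp2F1 (a b c t : ℝ) : ℝ :=
  ∑' n : ℕ, poch a n * poch b n / (poch c n * n.factorial) * t ^ n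

lemma key_nat (m : ℕ) {ν z : ℝ} (hν : 0 < ν) (hz : |z| < 1) :
    ∫ q in (0:ℝ)..(2 * Real.pi),
        Complex.exp (Complex.I * (m : ℂ) * (q : ℂ)) *
          ((1 - z * Real.cos q) ^ (-ν) : ℝ)
      = ((2 * Real.pi / (Nat.factorial m) * (z / 2) ^ m
            * (Real.Gamma (ν + m) / Real.Gamma ν)
            * hyp2F1 ((ν + m) / 2) ((1 + ν + m) / 2) (1 + m) (z ^ 2) : ℝ) : ℂ) := by
  have hπ : (0:ℝ) < Real.pi := Real.pi_pos
  have h02 : (0:ℝ) ≤ 2 * Real.pi := by positivity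
  set c : ℕ → ℝ := fun n => poch ν n / n.factorial with hc_def
  have hcpos : ∀ n, 0 < c n := fun n => by
    have := poch_pos hν n
    rw [hc_def]; positivity
  set F : ℕ → ℝ → ℂ := fun n q => Complex.exp (Complex.I * (m : ℂ) * (q : ℂ)) *
      ((c n * (z * Real.cos q) ^ n : ℝ) : ℂ) with hF_def
  have hzq : ∀ q : ℝ, |z * Real.cos q| < 1 := by
    intro q
    calc |z * Real.cos q| = |z| * |Real.cos q| := abs_mul _ _
      _ ≤ |z| * 1 := mul_le_mul_of_nonneg_left (Real.abs_cos_le_one q) (abs_nonneg z)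
      _ < 1 := by rwa [mul_one]
  have hexp1 : ∀ q : ℝ, ‖Complex.exp (Complex.I * (m : ℂ) * (q : ℂ))‖ = 1 := by
    intro q
    rw [show Complex.I * (m : ℂ) * (q : ℂ) = (((m : ℝ) * q : ℝ) : ℂ) * Complex.I by
      push_cast; ring]
    exact Complex.norm_exp_ofReal_mul_I _
  have hptsum : ∀ q : ℝ, HasSum (fun n => F n q)
      (Complex.exp (Complex.I * (m : ℂ) * (q : ℂ)) * ((1 - z * Real.cos q) ^ (-ν) : ℝ)) := by
    intro q
    have hb := hasSum_binom hν (hzq q)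
    exact (hb.mapL Complex.ofRealCLM).mul_left _
  -- integrability and norm bounds
  have hFcont : ∀ n, Continuous (F n) := by
    intro n
    apply Continuous.mul
    · exact Complex.continuous_exp.comp (by fun_prop)
    · exact Complex.continuous_ofReal.comp (by fun_prop)
  have hFnorm : ∀ n q, ‖F n q‖ ≤ c n * |z| ^ n := by
    intro n q
    rw [hF_def]
    simp only []
    rw [norm_mul, hexp1, one_mul, Complex.norm_real, Real.norm_eq_abs, abs_mul,
      _root_.abs_of_nonneg (hcpos n).le, _root_.abs_pow]
    have : |z * Real.cos q| ^ n ≤ |z| ^ n := by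
      apply pow_le_pow_left₀ (abs_nonneg _)
      calc |z * Real.cos q| = |z| * |Real.cos q| := abs_mul _ _
        _ ≤ |z| * 1 := mul_le_mul_of_nonneg_left (Real.abs_cos_le_one q) (abs_nonneg z)
        _ = |z| := mul_one _
    exact mul_le_mul_of_nonneg_left this (hcpos n).le
  set μ : MeasureTheory.Measure ℝ := MeasureTheory.volume.restrict (Set.Ioc 0 (2 * Real.pi))
    with hμ_def
  have hF_int : ∀ n, MeasureTheory.Integrable (F n) μ :=
    fun n => (hFcont n).integrableOn_Ioc
  have hF_norm_int : ∀ n, (∫ q, ‖F n q‖ ∂μ) ≤ c n * |z| ^ n * (2 * Real.pi) := by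
    intro n
    have h1 : (∫ q, ‖F n q‖ ∂μ) = ∫ q in (0:ℝ)..(2*Real.pi), ‖F n q‖ := by
      rw [intervalIntegral.integral_of_le h02]
    rw [h1]
    have h2 := intervalIntegral.norm_integral_le_of_norm_le_const
      (a := 0) (b := 2*Real.pi) (C := c n * |z| ^ n) (f := fun q => ‖F n q‖)
      (fun q _ => by rw [norm_norm]; exact hFnorm n q)
    have h3 : (∫ q in (0:ℝ)..(2*Real.pi), ‖F n q‖)
        ≤ ‖∫ q in (0:ℝ)..(2*Real.pi), ‖F n q‖‖ := le_abs_self _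
    calc (∫ q in (0:ℝ)..(2*Real.pi), ‖F n q‖)
        ≤ ‖∫ q in (0:ℝ)..(2*Real.pi), ‖F n q‖‖ := h3
      _ ≤ c n * |z| ^ n * |2*Real.pi - 0| := h2
      _ = c n * |z| ^ n * (2 * Real.pi) := by rw [sub_zero, _root_.abs_of_nonneg h02]
  have hF_sum : Summable fun n => ∫ q, ‖F n q‖ ∂μ := by
    apply Summable.of_nonneg_of_le
      (fun n => MeasureTheory.integral_nonneg (fun q => norm_nonneg _)) hF_norm_int
    exact (summable_c hν (abs_nonneg z) hz).mul_right (2 * Real.pi)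
  have hswap := MeasureTheory.integral_tsum_of_summable_integral_norm hF_int hF_sum
  -- identify the full integral
  have hIeq : ∫ q in (0:ℝ)..(2 * Real.pi),
      Complex.exp (Complex.I * (m : ℂ) * (q : ℂ)) * ((1 - z * Real.cos q) ^ (-ν) : ℝ)
      = ∑' n, ∫ q, F n q ∂μ := by
    rw [hswap, intervalIntegral.integral_of_le h02]
    apply MeasureTheory.integral_congr_ae
    filter_upwards with q
    rw [(hptsum q).tsum_eq]
  rw [hIeq]
  -- compute each integral
  have hInt : ∀ n, (∫ q, F n q ∂μ) = ((c n * z ^ n : ℝ) : ℂ) *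
      ∑ j ∈ Finset.range (n+1), (n.choose j : ℂ) * (2:ℂ)⁻¹ ^ n *
        (if ((m : ℤ) + 2*j - n : ℤ) = 0 then (2 * Real.pi : ℂ) else 0) := by
    intro n
    rw [← cos_pow_int m n, ← intervalIntegral.integral_of_le h02,
      ← intervalIntegral.integral_const_mul]
    apply intervalIntegral.integral_congr
    intro q _
    rw [hF_def]
    push_cast
    ring
  rw [tsum_congr hInt]
  -- reindexing
  set A : ℕ → ℂ := fun n => ((c n * z ^ n : ℝ) : ℂ) *
      ∑ j ∈ Finset.range (n+1), (n.choose j : ℂ) * (2:ℂ)⁻¹ ^ n *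
        (if ((m : ℤ) + 2*j - n : ℤ) = 0 then (2 * Real.pi : ℂ) else 0) with hA_def
  have hginj : Function.Injective (fun p : ℕ => m + 2*p) := by
    intro a b h
    simp only [] at h
    omega
  have hsupp : ∀ n, n ∉ Set.range (fun p : ℕ => m + 2*p) → A n = 0 := by
    intro n hn
    rw [hA_def]
    simp only []
    convert mul_zero (((c n * z ^ n : ℝ) : ℂ)) using 2
    apply Finset.sum_eq_zero
    intro j hj
    rw [if_neg, mul_zero]
    intro hc0
    exact hn ⟨j, show m + 2*j = n by omega⟩
  have hsub : Function.support A ⊆ Set.range (fun p : ℕ => m + 2*p) := by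
    intro n hn
    by_contra hmem
    exact hn (hsupp n hmem)
  have hAp : ∀ p, A (m + 2*p) = ((c (m+2*p) * z^(m+2*p) * (((m+2*p).choose p : ℕ):ℝ)
      * (2:ℝ)⁻¹^(m+2*p) * (2*Real.pi) : ℝ) : ℂ) := by
    intro p
    rw [hA_def]
    simp only []
    have hsum1 : ∀ j ∈ Finset.range (m+2*p+1),
        ((m+2*p).choose j : ℂ) * (2:ℂ)⁻¹ ^ (m+2*p) *
            (if ((m:ℤ)+2*j-((m+2*p : ℕ) : ℤ) : ℤ) = 0 then (2*Real.pi:ℂ) else 0)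
        = if j = p then ((m+2*p).choose j : ℂ) * (2:ℂ)⁻¹ ^ (m+2*p) * (2*Real.pi:ℂ) else 0 := by
      intro j hj
      rcases eq_or_ne j p with rfl | hne
      · rw [if_pos rfl, if_pos (by push_cast; ring)]
      · rw [if_neg, mul_zero, if_neg hne]
        intro hc0; exact hne (by omega)
    rw [Finset.sum_congr rfl hsum1, Finset.sum_ite_eq' (Finset.range (m+2*p+1)) p
      (fun j => ((m+2*p).choose j : ℂ) * (2:ℂ)⁻¹ ^ (m+2*p) * (2*Real.pi:ℂ)),
      if_pos (Finset.mem_range.mpr (by omega))]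
    push_cast
    ring
  rw [← Function.Injective.tsum_eq hginj hsub, tsum_congr hAp, ← Complex.ofReal_tsum]
  apply Complex.ofReal_inj.mpr
  have hΓ : Real.Gamma (ν + m) / Real.Gamma ν = poch ν m := by
    rw [Gamma_ratio hν m]
    field_simp [(Real.Gamma_pos_of_pos hν).ne']
  rw [hΓ]
  have hterm : ∀ p : ℕ, c (m+2*p) * z^(m+2*p) * (((m+2*p).choose p : ℕ):ℝ)
      * (2:ℝ)⁻¹^(m+2*p) * (2*Real.pi)
      = (2 * Real.pi / (m.factorial : ℝ) * (z/2)^m * poch ν m)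
        * (poch ((ν + m)/2) p * poch ((1 + ν + m)/2) p
            / (poch (1 + (m:ℝ)) p * (p.factorial : ℝ)) * (z^2)^p) := by
    intro p
    rw [hc_def]
    exact term_eq hν m p
  rw [tsum_congr hterm, tsum_mul_left]
  rw [hyp2F1]

lemma neg_flip (m : ℕ) (ν z : ℝ) :
    ∫ q in (0:ℝ)..(2 * Real.pi),
        Complex.exp (Complex.I * (-(m:ℂ)) * (q:ℂ)) * ((1 - z * Real.cos q) ^ (-ν) : ℝ)
      = ∫ q in (0:ℝ)..(2 * Real.pi),
        Complex.exp (Complex.I * (m:ℂ) * (q:ℂ)) * ((1 - z * Real.cos q) ^ (-ν) : ℝ) := by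
  set f : ℝ → ℂ := fun q => Complex.exp (Complex.I * (-(m:ℂ)) * (q:ℂ))
      * ((1 - z * Real.cos q) ^ (-ν) : ℝ) with hf_def
  have h := intervalIntegral.integral_comp_sub_left (a := 0) (b := 2*Real.pi) f (2*Real.pi)
  rw [sub_self, sub_zero] at h
  rw [← h]
  apply intervalIntegral.integral_congr
  intro q _
  show f (2*Real.pi - q)
      = Complex.exp (Complex.I * (m:ℂ) * (q:ℂ)) * ((1 - z * Real.cos q) ^ (-ν) : ℝ)
  rw [hf_def]
  simp only []
  rw [Real.cos_two_pi_sub]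
  congr 1
  rw [show Complex.I * (-(m:ℂ)) * (((2*Real.pi - q : ℝ)):ℂ)
      = ((-(m:ℤ) : ℤ):ℂ) * (2*(Real.pi:ℂ)*Complex.I) + Complex.I*(m:ℂ)*(q:ℂ) by
    push_cast; ring]
  rw [Complex.exp_add, Complex.exp_int_mul_two_pi_mul_I, one_mul]

/-- for all integers `k`, `ν > 0` and `|z| < 1`,
`∫₀^{2π} e^{iqk}(1 - z cos q)^{-ν} dq
  = (2π/|k|!)(z/2)^{|k|} (Γ(ν+|k|)/Γ(ν)) ₂F₁((ν+|k|)/2, (1+ν+|k|)/2; 1+|k|; z²)`. -/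
theorem stmt_14 (k : ℤ) (ν z : ℝ) (hν : 0 < ν) (hz : |z| < 1) :
    ∫ q in (0:ℝ)..(2 * Real.pi),
        Complex.exp (Complex.I * (k : ℂ) * (q : ℂ)) *
          ((1 - z * Real.cos q) ^ (-ν) : ℝ)
      = ((2 * Real.pi / (Nat.factorial k.natAbs) * (z / 2) ^ k.natAbs
            * (Real.Gamma (ν + k.natAbs) / Real.Gamma ν)
            * hyp2F1 ((ν + k.natAbs) / 2) ((1 + ν + k.natAbs) / 2)
                (1 + k.natAbs) (z ^ 2) : ℝ) : ℂ) := by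
  rcases le_or_gt 0 k with hk | hk
  · have hke : ((k : ℤ) : ℂ) = ((k.natAbs : ℕ) : ℂ) := by
      rw [← Int.cast_natCast (R := ℂ), Int.natAbs_of_nonneg hk]
    simp only [hke]
    exact key_nat k.natAbs hν hz
  · have hke : ((k : ℤ) : ℂ) = -((k.natAbs : ℕ) : ℂ) := by
      have h1 : (k : ℤ) = -(k.natAbs : ℤ) := by omega
      rw [← Int.cast_natCast (R := ℂ), ← Int.cast_neg, ← h1]
    simp only [hke]
    rw [show -((k.natAbs : ℕ) : ℂ) = (-((k.natAbs : ℕ) : ℂ)) from rfl]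
    rw [neg_flip k.natAbs ν z]
    exact key_nat k.natAbs hν hz
end

section
/- Suppose the underlying first hitting time distribution has finite first moment μ₁(x,x₀), finite second moment μ₂(x,x₀) (from x₀), and finite mean μ₁(x,x_r) from x_r. Then the mean first hitting time under resetting satisfies ⟨τ_r⟩ = μ₁(x,x₀) - (r/2)[μ₂(x,x₀) - μ₁(x,x₀) - 2μ₁(x,x₀)μ₁(x,x_r)] + o(r) as r → 0⁺; in particular the derivative of ⟨τ_r⟩ at r = 0⁺ is negative if and only if μ₂(x,x₀) > 2μ₁(x,x₀)μ₁(x,x_r) + μ₁(x,x₀). -/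
open Filter Asymptotics

/-- if the reset-free generating functions admit the expansions
`F̃(x,z|x₀) = 1 - (1-z)μ₁₀ + ((1-z)²/2)(μ₂₀-μ₁₀) + o((1-z)²)` and
`F̃(x,z|x_r) = 1 - (1-z)μ₁ᵣ + o(1-z)` as `z → 1⁻`, then
`⟨τ_r⟩ = μ₁₀ - (r/2)[μ₂₀ - μ₁₀ - 2μ₁₀μ₁ᵣ] + o(r)` as `r → 0⁺`; in particular the
slope at `r = 0⁺` is negative iff `μ₂₀ > 2μ₁₀μ₁ᵣ + μ₁₀`. -/
theorem stmt_18 (F0 Fr : ℝ → ℝ) (μ10 μ20 μ1r : ℝ)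
    (hF0 : (fun z : ℝ => F0 z -
        (1 - (1 - z) * μ10 + (1 - z) ^ 2 / 2 * (μ20 - μ10)))
      =o[nhdsWithin 1 (Set.Iio 1)] fun z => (1 - z) ^ 2)
    (hFr : (fun z : ℝ => Fr z - (1 - (1 - z) * μ1r))
      =o[nhdsWithin 1 (Set.Iio 1)] fun z => (1 - z)) :
    ((fun r : ℝ => (1 - F0 (1 - r)) / (r * Fr (1 - r))
        - (μ10 - r / 2 * (μ20 - μ10 - 2 * μ10 * μ1r)))
      =o[nhdsWithin 0 (Set.Ioi 0)] fun r => r) ∧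
    (-(1 / 2) * (μ20 - μ10 - 2 * μ10 * μ1r) < 0 ↔
      μ20 > 2 * μ10 * μ1r + μ10) := by
  refine ⟨?_, by constructor <;> intro h <;> nlinarith⟩
  set l := nhdsWithin (0:ℝ) (Set.Ioi 0) with hl
  have tsub : Tendsto (fun r : ℝ => 1 - r) l (nhdsWithin 1 (Set.Iio 1)) := by
    apply tendsto_nhdsWithin_of_tendsto_nhds_of_eventually_within
    · have hc : Continuous fun r : ℝ => 1 - r := by continuity
      have h := hc.tendsto (0:ℝ)
      simpa using h.mono_left nhdsWithin_le_nhds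
    · filter_upwards [self_mem_nhdsWithin] with r hr
      have h0 : (0:ℝ) < r := hr
      simp only [Set.mem_Iio]; linarith
  have hα := hF0.comp_tendsto tsub
  have hβ := hFr.comp_tendsto tsub
  simp only [Function.comp_def, sub_sub_cancel] at hα hβ
  -- hα : (fun r => F0 (1-r) - (1 - r*μ10 + r^2/2*(μ20-μ10))) =o[l] fun r => r^2
  -- hβ : (fun r => Fr (1-r) - (1 - r*μ1r)) =o[l] fun r => r
  set P : ℝ → ℝ := fun r => μ10 - r / 2 * (μ20 - μ10 - 2 * μ10 * μ1r) with hPdef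
  have hPt : Tendsto P l (nhds μ10) := by
    have hc : Continuous P := by rw [hPdef]; continuity
    have h := hc.tendsto (0:ℝ)
    simpa [hPdef] using h.mono_left nhdsWithin_le_nhds
  have hPO : P =O[l] (fun _ => (1:ℝ)) := hPt.isBigO_one ℝ
  have hrP : (fun r : ℝ => r * P r) =O[l] fun r => r := by
    simpa using (isBigO_refl (fun r : ℝ => r) l).mul hPO
  have hrPβ : (fun r : ℝ => (r * P r) * (Fr (1-r) - (1 - r*μ1r))) =o[l] fun r => r^2 := by
    simpa [sq] using hrP.mul_isLittleO hβ
  set k : ℝ := μ1r * ((μ20 - μ10) - 2*μ10*μ1r) / 2 with hkdef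
  have hcube : (fun r : ℝ => k * r^3) =o[l] fun r => r^2 := by
    have h1 : (fun r : ℝ => k * r) =o[l] (fun _ => (1:ℝ)) := by
      rw [isLittleO_one_iff]
      have hc : Continuous fun r : ℝ => k * r := by continuity
      have := hc.tendsto (0:ℝ)
      simpa using this.mono_left nhdsWithin_le_nhds
    have := h1.mul_isBigO (isBigO_refl (fun r : ℝ => r^2) l)
    exact this.congr (fun r => by ring) (fun r => by ring)
  have h1 : (fun r : ℝ => (1 - F0 (1-r)) - P r * (r * Fr (1-r))) =o[l] fun r => r^2 := by
    have h := ((hα.neg_left).sub hrPβ).sub hcube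
    refine h.congr (fun r => ?_) (fun r => rfl)
    simp only [hPdef, hkdef]; ring
  -- denominator control
  have hrt : Tendsto (fun r : ℝ => r) l (nhds 0) := tendsto_id.mono_right nhdsWithin_le_nhds
  have hβ0 : Tendsto (fun r : ℝ => Fr (1-r) - (1 - r*μ1r)) l (nhds 0) :=
    hβ.isBigO.trans_tendsto hrt
  have hFr1 : Tendsto (fun r : ℝ => Fr (1-r)) l (nhds 1) := by
    have h2 : Tendsto (fun r : ℝ => 1 - r*μ1r) l (nhds 1) := by
      have hc : Continuous fun r : ℝ => 1 - r*μ1r := by continuity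
      have := hc.tendsto (0:ℝ)
      simpa using this.mono_left nhdsWithin_le_nhds
    simpa using hβ0.add h2
  have hhalf : ∀ᶠ r in l, (1:ℝ)/2 ≤ Fr (1 - r) :=
    hFr1.eventually_const_le (by norm_num)
  rw [isLittleO_iff]
  intro ε εpos
  have hev := h1.def (show (0:ℝ) < ε/2 by positivity)
  filter_upwards [hev, hhalf, self_mem_nhdsWithin] with r hb hh hr
  have hr0 : (0:ℝ) < r := hr
  have hD : 0 < r * Fr (1 - r) := by nlinarith
  have key : (1 - F0 (1 - r)) / (r * Fr (1 - r)) - P r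
      = ((1 - F0 (1 - r)) - P r * (r * Fr (1 - r))) / (r * Fr (1 - r)) := by
    field_simp
  rw [key]
  rw [Real.norm_eq_abs, Real.norm_eq_abs, abs_div, abs_of_pos hD]
  rw [div_le_iff₀ hD]
  have hb' : |(1 - F0 (1 - r)) - P r * (r * Fr (1 - r))| ≤ ε/2 * r^2 := by
    have := hb
    rw [Real.norm_eq_abs, Real.norm_eq_abs] at this
    calc |(1 - F0 (1 - r)) - P r * (r * Fr (1 - r))| ≤ ε/2 * |r^2| := this
    _ = ε/2 * r^2 := by rw [abs_of_nonneg (by positivity)]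
  have habs : |r| = r := abs_of_pos hr0
  rw [habs]
  nlinarith [mul_nonneg (mul_nonneg εpos.le (mul_pos hr0 hr0).le)
    (by linarith : (0:ℝ) ≤ Fr (1-r) - 1/2)]
end
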